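/- arXiv:2210.10268 — 7 statements merged into one kernel-verified Lean document; each statement's English description precedes it below -/
import Mathlib

section
/- Let d ≥ 1 and m ≥ 2 be integers. Then, as integers, d·C(d+m−2, m−1)² − (d(d−1)/2)·C(d+m−3, m−2)² ≤ |A_d^m| ≤ d·C(d+m−2, m−1)². -/
/-!
STATEMENT 2: For integers `d ≥ 1` and `m ≥ 2`, with `T(d,m)` the set of multi-indices
`α ∈ ℕ^d` with `∑ α_i = m` and `A_d^m` the set of ordered pairs `(α, β) ∈ T(d,m) × T(d,m)`
sharing a variable (some index `i` with `α_i ≥ 1` and `β_i ≥ 1`), one has, as integers,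
`d·C(d+m−2, m−1)² − (d(d−1)/2)·C(d+m−3, m−2)² ≤ |A_d^m| ≤ d·C(d+m−2, m−1)²`.
-/

/-- The set `A_d^m` of ordered pairs of multi-indices of total degree `m` on `d` variables
whose monomials share a variable. -/
noncomputable def Adm (d m : ℕ) : Finset ((Fin d → ℕ) × (Fin d → ℕ)) :=
  (Finset.Nat.antidiagonalTuple d m ×ˢ Finset.Nat.antidiagonalTuple d m).filter
    (fun p => ∃ i, 1 ≤ p.1 i ∧ 1 ≤ p.2 i)

/-!
`A_d^m` is the union over the variables `i` of `P_i × P_i`, where `P_i` is the set of degree-`m`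
monomials divisible by `x_i`. Dividing by `x_i` identifies `P_i` with the monomials of degree
`m - 1`, and `P_i ∩ P_j` (for `i ≠ j`) with those of degree `m - 2`, so stars and bars gives
`|P_i| = C(d+m-2, m-1)` and `|P_i ∩ P_j| = C(d+m-3, m-2)`. The upper bound is the union bound and
the lower bound is the second Bonferroni inequality.
-/

open Finset

lemma card_antidiagonalTuple (k n : ℕ) :
    #(Nat.antidiagonalTuple k n) = (k + n - 1).choose n := by
  simpa [finsuppAntidiag, piAntidiag_univ_fin_eq_antidiagonalTuple] using
    card_finsuppAntidiag_nat_eq_choose (s := (univ : Finset (Fin k))) n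

lemma card_filter_forall_one_le_antidiagonalTuple {d : ℕ} (s : Finset (Fin d)) (n : ℕ) :
    #{α ∈ Nat.antidiagonalTuple d (n + #s) | ∀ i ∈ s, 1 ≤ α i} =
      #(Nat.antidiagonalTuple d n) := by
  set e : Fin d → ℕ := fun i => if i ∈ s then 1 else 0
  have he : ∑ i, e i = #s := by simp [e]
  symm
  apply card_nbij' (· + e) (· - e)
  · intro β hβ
    simp only [coe_filter, Set.mem_ofPred_eq, mem_coe, Nat.mem_antidiagonalTuple] at hβ ⊢
    refine ⟨by rw [Pi.add_def, sum_add_distrib, hβ, he], fun i hi => ?_⟩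
    simp [e, hi]
  · intro α hα
    simp only [coe_filter, Set.mem_ofPred_eq, mem_coe, Nat.mem_antidiagonalTuple] at hα ⊢
    have hsplit : α = (α - e) + e := by
      funext i
      by_cases hi : i ∈ s <;> simp [e, hi, Nat.sub_add_cancel (hα.2 i _)]
    have hsum := hα.1
    rw [hsplit, Pi.add_def, sum_add_distrib, he] at hsum
    omega
  · intro β _
    simp
  · intro α hα
    simp only [coe_filter, Set.mem_ofPred_eq] at hα
    funext i
    by_cases hi : i ∈ s
    · simp [e, hi, Nat.sub_add_cancel (hα.2 i hi)]
    · simp [e, hi]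

lemma sum_card_eq_sum_card_filter_mem {κ β : Type*} [DecidableEq β] (t : Finset κ)
    (T : κ → Finset β) {U : Finset β} (hT : ∀ k ∈ t, T k ⊆ U) :
    ∑ k ∈ t, #(T k) = ∑ x ∈ U, #{k ∈ t | x ∈ T k} := by
  refine (sum_congr rfl fun k hk => ?_).trans
    (sum_card_bipartiteAbove_eq_sum_card_bipartiteBelow (fun k x => x ∈ T k))
  rw [bipartiteAbove, filter_mem_eq_inter, inter_eq_right.2 (hT k hk)]

lemma two_mul_sum_card_le {ι β : Type*} [DecidableEq ι] [DecidableEq β] (s : Finset ι)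
    (S : ι → Finset β) :
    2 * ∑ i ∈ s, #(S i) ≤ 2 * #(s.biUnion S) + ∑ p ∈ s.offDiag, #(S p.1 ∩ S p.2) := by
  have hS : ∀ i ∈ s, S i ⊆ s.biUnion S := fun i hi => subset_biUnion_of_mem S hi
  rw [sum_card_eq_sum_card_filter_mem s S hS, sum_card_eq_sum_card_filter_mem s.offDiag _
      fun p hp => inter_subset_left.trans (hS _ (mem_offDiag.1 hp).1),
    card_eq_sum_ones, mul_sum, mul_sum, ← sum_add_distrib]
  refine sum_le_sum fun x hx => ?_
  have hoff : {p ∈ s.offDiag | x ∈ S p.1 ∩ S p.2} = {i ∈ s | x ∈ S i}.offDiag := by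
    ext
    simp only [mem_filter, mem_offDiag, mem_inter]
    tauto
  have hpos : 0 < #{i ∈ s | x ∈ S i} := card_pos.2 (by simpa [filter_nonempty_iff] using hx)
  rw [hoff, offDiag_card]
  generalize #{i ∈ s | x ∈ S i} = k at hpos ⊢
  -- `2k ≤ 2 + k(k - 1)` for `k ≥ 1`, i.e. `(k - 1)(k - 2) ≥ 0`
  obtain ⟨k, rfl⟩ := Nat.exists_eq_add_of_lt hpos
  have hsq : (0 + k + 1) * (0 + k + 1) = k * k + 2 * k + 1 := by ring
  have := Nat.le_mul_self k
  omega

def multiplesOfVar (d m : ℕ) (i : Fin d) : Finset (Fin d → ℕ) :=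
  {α ∈ Nat.antidiagonalTuple d m | 1 ≤ α i}

def pairsWithVar (d m : ℕ) (i : Fin d) : Finset ((Fin d → ℕ) × (Fin d → ℕ)) :=
  multiplesOfVar d m i ×ˢ multiplesOfVar d m i

lemma Adm_eq_biUnion_pairsWithVar (d m : ℕ) : Adm d m = univ.biUnion (pairsWithVar d m) := by
  ext
  simp only [Adm, pairsWithVar, multiplesOfVar, mem_filter, mem_product, mem_biUnion, mem_univ,
    true_and]
  tauto

lemma card_pairsWithVar {d : ℕ} (i : Fin d) (n : ℕ) :
    #(pairsWithVar d (n + 1) i) = ((d + n - 1).choose n) ^ 2 := by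
  have h := card_filter_forall_one_le_antidiagonalTuple {i} n
  simp only [mem_singleton, forall_eq, card_singleton, card_antidiagonalTuple] at h
  rw [pairsWithVar, card_product, multiplesOfVar, h, sq]

lemma card_pairsWithVar_inter {d : ℕ} {i j : Fin d} (hij : i ≠ j) (n : ℕ) :
    #(pairsWithVar d (n + 2) i ∩ pairsWithVar d (n + 2) j) = ((d + n - 1).choose n) ^ 2 := by
  have h := card_filter_forall_one_le_antidiagonalTuple {i, j} n
  simp only [mem_insert, mem_singleton, forall_eq_or_imp, forall_eq, card_pair hij,
    card_antidiagonalTuple] at h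
  rw [pairsWithVar, pairsWithVar, product_inter_product, card_product, multiplesOfVar,
    multiplesOfVar, ← filter_and, h, sq]

lemma card_Adm_le (d n : ℕ) : #(Adm d (n + 1)) ≤ d * ((d + n - 1).choose n) ^ 2 := by
  rw [Adm_eq_biUnion_pairsWithVar]
  refine card_biUnion_le.trans ?_
  simp [card_pairsWithVar]

lemma two_mul_le_card_Adm (d n : ℕ) :
    2 * ((d : ℤ) * ((d + n).choose (n + 1) : ℤ) ^ 2) ≤
      2 * #(Adm d (n + 2)) + d * (d - 1) * ((d + n - 1).choose n : ℤ) ^ 2 := by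
  have h := two_mul_sum_card_le univ (pairsWithVar d (n + 2))
  rw [← Adm_eq_biUnion_pairsWithVar,
    sum_congr rfl fun p hp => card_pairsWithVar_inter (mem_offDiag.1 hp).2.2 n] at h
  simp only [card_pairsWithVar, sum_const, card_univ, Fintype.card_fin, offDiag_card,
    smul_eq_mul, Nat.add_succ_sub_one] at h
  have hZ := (Nat.cast_le (α := ℤ)).2 h
  push_cast [Nat.cast_sub (Nat.le_mul_self d)] at hZ
  linarith

theorem card_Adm_bounds_general (d m : ℕ) (hm : 2 ≤ m) :
    (d : ℤ) * (Nat.choose (d + m - 2) (m - 1) : ℤ) ^ 2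
        - (d : ℤ) * ((d : ℤ) - 1) / 2 * (Nat.choose (d + m - 3) (m - 2) : ℤ) ^ 2
      ≤ ((Adm d m).card : ℤ) ∧
    ((Adm d m).card : ℤ) ≤ (d : ℤ) * (Nat.choose (d + m - 2) (m - 1) : ℤ) ^ 2 := by
  obtain ⟨n, rfl⟩ : ∃ n, m = n + 2 := ⟨m - 2, by omega⟩
  rw [show d + (n + 2) - 2 = d + n by omega, show n + 2 - 1 = n + 1 by omega,
    show d + (n + 2) - 3 = d + n - 1 by omega, Nat.add_sub_cancel]
  have hhalf : 2 * ((d : ℤ) * (d - 1) / 2) * ((d + n - 1).choose n : ℤ) ^ 2 =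
      d * (d - 1) * ((d + n - 1).choose n : ℤ) ^ 2 := by
    rw [Int.mul_ediv_cancel' (Int.even_mul_pred_self d).two_dvd]
  constructor
  · linarith [two_mul_le_card_Adm d n]
  · exact_mod_cast card_Adm_le d (n + 1)

theorem card_Adm_bounds (d m : ℕ) (hd : 1 ≤ d) (hm : 2 ≤ m) :
    (d : ℤ) * (Nat.choose (d + m - 2) (m - 1) : ℤ) ^ 2
        - (d : ℤ) * ((d : ℤ) - 1) / 2 * (Nat.choose (d + m - 3) (m - 2) : ℤ) ^ 2
      ≤ ((Adm d m).card : ℤ) ∧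
    ((Adm d m).card : ℤ) ≤ (d : ℤ) * (Nat.choose (d + m - 2) (m - 1) : ℤ) ^ 2 :=
  card_Adm_bounds_general d m hm
end

section
/- Let d ≥ 1 and m ≥ 1 be integers and set S(d,m) = Σ_{k=1}^{min(d,m)} C(d,k)·C(2m−k−1, k−1). Then S(d,m) ≤ |B_d^m| ≤ e^{2m} · S(d,m). -/
/-!
STATEMENT 3: For integers `d ≥ 1`, `m ≥ 1`, with `B_d^m` the set of ordered pairs
`(α, β) ∈ T(d,m) × T(d,m)` such that `α_i + β_i ≠ 1` for every `i`, and
`S(d,m) = ∑_{k=1}^{min(d,m)} C(d,k)·C(2m−k−1, k−1)`, one has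
`S(d,m) ≤ |B_d^m| ≤ e^{2m} · S(d,m)`.
-/

/-- The set `B_d^m` of ordered pairs of multi-indices of total degree `m` on `d` variables
whose product monomial contains no variable of degree exactly 1. -/
noncomputable def Bdm (d m : ℕ) : Finset ((Fin d → ℕ) × (Fin d → ℕ)) :=
  (Finset.Nat.antidiagonalTuple d m ×ˢ Finset.Nat.antidiagonalTuple d m).filter
    (fun p => ∀ i, p.1 i + p.2 i ≠ 1)

/-- `S(d,m) = ∑_{k=1}^{min(d,m)} C(d,k)·C(2m−k−1, k−1)`. -/
def Sdm (d m : ℕ) : ℕ :=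
  ∑ k ∈ Finset.Icc 1 (min d m), Nat.choose d k * Nat.choose (2 * m - k - 1) (k - 1)

/-!
Sending `(α, β)` to `γ = α + β` maps `B_d^m` onto the tuples `γ` of total degree `2m` with no entry
equal to `1`, and each fibre has between `1` and `∏ (γ i + 1) ≤ exp (∑ γ i) = exp (2m)` elements.
Those `γ` are counted by their support `s`: subtracting `2` on `s` leaves an arbitrary weak
composition of `2m - 2|s|` into `|s|` parts, so stars and bars gives `C(2m - |s| - 1, |s| - 1)` of
them, and summing over `s` gives `S(d,m)`.
-/

open Finset

namespace Finset

variable {ι : Type*} [DecidableEq ι]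

theorem card_sym (s : Finset ι) (n : ℕ) : #(s.sym n) = (#s + n - 1).choose n := by
  rw [← attach_map_val (s := s), sym_map, card_map, card_map, ← univ_eq_attach, sym_univ,
    card_univ, Sym.card_sym_eq_choose, card_univ]

theorem card_piAntidiag_eq_choose (s : Finset ι) (n : ℕ) :
    #(s.piAntidiag n) = (#s + n - 1).choose n := by
  rw [← map_sym_eq_piAntidiag, card_map, card_sym]

def twoLePiAntidiag (s : Finset ι) (n : ℕ) : Finset (ι → ℕ) :=
  {f ∈ s.piAntidiag n | ∀ i ∈ s, 2 ≤ f i}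

theorem mem_twoLePiAntidiag {s : Finset ι} {n : ℕ} {f : ι → ℕ} :
    f ∈ twoLePiAntidiag s n ↔ (∑ i ∈ s, f i = n ∧ ∀ i, f i ≠ 0 → i ∈ s) ∧ ∀ i ∈ s, 2 ≤ f i := by
  simp [twoLePiAntidiag, mem_piAntidiag]

theorem card_twoLePiAntidiag_eq_card_piAntidiag (s : Finset ι) {n : ℕ} (h : 2 * #s ≤ n) :
    #(twoLePiAntidiag s n) = #(s.piAntidiag (n - 2 * #s)) := by
  set c : ι → ℕ := fun i => if i ∈ s then 2 else 0
  have hc : ∑ i ∈ s, c i = 2 * #s := by simp +contextual [c, mul_comm]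
  refine card_nbij' (· - c) (· + c) ?_ ?_ ?_ ?_ <;> intro f hf <;>
    simp only [mem_coe, mem_twoLePiAntidiag, mem_piAntidiag] at hf ⊢
  · obtain ⟨⟨hsum, hsupp⟩, h2⟩ := hf
    refine ⟨?_, fun i hi => hsupp i fun h0 => hi (by simp [h0])⟩
    rw [Pi.sub_def, sum_tsub_distrib, hsum, hc]
    intro i hi
    simp [c, hi, h2 i hi]
  · obtain ⟨hsum, hsupp⟩ := hf
    refine ⟨⟨?_, fun i hi => ?_⟩, fun i hi => by simp [c, hi]⟩
    · rw [Pi.add_def, sum_add_distrib, hsum, hc]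
      omega
    · by_contra his
      simp [c, his, hsupp i |>.mt his] at hi
  · obtain ⟨⟨hsum, hsupp⟩, h2⟩ := hf
    ext i
    by_cases hi : i ∈ s
    · simp [c, hi, h2 i hi]
    · simp [c, hi]
  · ext i
    simp

theorem card_twoLePiAntidiag {s : Finset ι} (hs : s.Nonempty) {n : ℕ}
    (hn : 2 ≤ n) : #(twoLePiAntidiag s n) = (n - #s - 1).choose (#s - 1) := by
  have hs₁ : 1 ≤ #s := hs.card_pos
  by_cases h : 2 * #s ≤ n
  · rw [card_twoLePiAntidiag_eq_card_piAntidiag s h, card_piAntidiag_eq_choose,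
      ← Nat.choose_symm (by omega)]
    congr 1 <;> omega
  -- for `2 * #s > n` (and `2 ≤ n`) the truncated subtractions still make the binomial vanish
  · rw [Nat.choose_eq_zero_of_lt (by omega), card_eq_zero, eq_empty_iff_forall_notMem]
    intro f hf
    obtain ⟨⟨hsum, -⟩, h2⟩ := mem_twoLePiAntidiag.1 hf
    have h2s : ∑ _i ∈ s, 2 ≤ ∑ i ∈ s, f i := sum_le_sum h2
    rw [sum_const, smul_eq_mul, hsum] at h2s
    omega

theorem exists_le_sum_eq (s : Finset ι) (γ : ι → ℕ) {n : ℕ} (h : n ≤ ∑ i ∈ s, γ i) :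
    ∃ α ≤ γ, ∑ i ∈ s, α i = n := by
  induction n with
  | zero => exact ⟨0, fun _ => Nat.zero_le _, by simp⟩
  | succ n ih =>
    obtain ⟨α, hαγ, hα⟩ := ih (by omega)
    obtain ⟨i, hi, hlt⟩ := exists_lt_of_sum_lt (hα.trans_lt h)
    refine ⟨α + Pi.single i 1, fun j => ?_, ?_⟩
    · rcases eq_or_ne j i with rfl | hj
      · simpa using hlt
      · simpa [hj] using hαγ j
    · simp only [Pi.add_apply]
      rw [sum_add_distrib, sum_pi_single', if_pos hi, hα]

end Finset

section OneFree

variable (ι : Type*) [Fintype ι] [DecidableEq ι]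

def oneFreeTuples (n : ℕ) : Finset (ι → ℕ) := {γ ∈ piAntidiag univ n | ∀ i, γ i ≠ 1}

variable {ι}

theorem mem_oneFreeTuples {n : ℕ} {γ : ι → ℕ} :
    γ ∈ oneFreeTuples ι n ↔ ∑ i, γ i = n ∧ ∀ i, γ i ≠ 1 := by
  simp [oneFreeTuples, mem_piAntidiag]

theorem card_oneFreeTuples_eq_sum_card_twoLePiAntidiag (n : ℕ) :
    #(oneFreeTuples ι n) = ∑ s ∈ (univ : Finset ι).powerset, #(twoLePiAntidiag s n) := by
  rw [card_eq_sum_card_fiberwise (f := fun γ : ι → ℕ => ({i | γ i ≠ 0} : Finset ι))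
    (t := univ.powerset) (by simp)]
  refine sum_congr rfl fun s _ => congrArg card (ext fun γ => ?_)
  simp only [mem_filter, mem_oneFreeTuples, mem_twoLePiAntidiag]
  constructor
  · rintro ⟨⟨hsum, hne⟩, rfl⟩
    refine ⟨⟨by rwa [sum_filter_ne_zero], fun i hi => by simpa using hi⟩, fun i hi => ?_⟩
    have := hne i
    simp only [mem_filter, mem_univ, true_and] at hi
    omega
  · rintro ⟨⟨hsum, hsupp⟩, h2⟩
    refine ⟨⟨?_, fun i h1 => ?_⟩, ?_⟩
    · rwa [← sum_subset (subset_univ s) fun i _ hi => not_imp_comm.1 (hsupp i) hi]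
    · have := h2 i (hsupp i (by omega))
      omega
    · ext i
      simp only [mem_filter, mem_univ, true_and]
      exact ⟨hsupp i, fun hi => by have := h2 i hi; omega⟩

theorem card_oneFreeTuples {n : ℕ} (hn : 2 ≤ n) : #(oneFreeTuples ι n) =
    ∑ k ∈ Icc 1 (Fintype.card ι), (Fintype.card ι).choose k * (n - k - 1).choose (k - 1) := by
  calc #(oneFreeTuples ι n)
      = ∑ s ∈ (univ : Finset ι).powerset, if #s = 0 then 0 else (n - #s - 1).choose (#s - 1) := by
        rw [card_oneFreeTuples_eq_sum_card_twoLePiAntidiag]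
        refine sum_congr rfl fun s _ => ?_
        split_ifs with hs
        · rw [card_eq_zero.1 hs, twoLePiAntidiag, piAntidiag_empty_of_ne_zero (by omega),
            filter_empty, card_empty]
        · exact card_twoLePiAntidiag (nonempty_of_ne_empty (by simpa using hs)) hn
    _ = ∑ k ∈ range (Fintype.card ι + 1),
          (Fintype.card ι).choose k * if k = 0 then 0 else (n - k - 1).choose (k - 1) := by
        rw [← Finset.card_univ]
        simpa only [smul_eq_mul] using
          sum_powerset_apply_card (fun k => if k = 0 then 0 else (n - k - 1).choose (k - 1))
    _ = _ := by
        rw [range_eq_Ico, sum_eq_sum_Ico_succ_bot (Nat.succ_pos _), Nat.succ_eq_add_one,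
          Ico_add_one_right_eq_Icc, if_pos rfl, mul_zero, zero_add]
        exact sum_congr rfl fun k hk => by rw [if_neg (Nat.one_le_iff_ne_zero.1 (mem_Icc.1 hk).1)]

end OneFree

section PairsWithSum

variable {ι : Type*} [Fintype ι] [DecidableEq ι]

theorem card_le_prod_add_one_of_forall_add_eq {P : Finset ((ι → ℕ) × (ι → ℕ))} {γ : ι → ℕ}
    (hP : ∀ p ∈ P, p.1 + p.2 = γ) : #P ≤ ∏ i, (γ i + 1) := by
  calc #P ≤ #(Fintype.piFinset fun i => range (γ i + 1)) := by
        refine card_le_card_of_injOn Prod.fst (fun p hp => ?_) fun p hp q hq hpq => ?_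
        · rw [mem_coe, Fintype.mem_piFinset]
          intro i
          rw [mem_range, ← hP p hp, Pi.add_apply]
          omega
        · refine Prod.ext hpq (add_left_cancel (a := p.1) ?_)
          rw [hP p hp, hpq, hP q hq]
    _ = ∏ i, (γ i + 1) := by simp [Fintype.card_piFinset]

theorem card_le_exp_mul_card_of_forall_add_mem {P : Finset ((ι → ℕ) × (ι → ℕ))}
    {G : Finset (ι → ℕ)} {n : ℕ} (hPG : ∀ p ∈ P, p.1 + p.2 ∈ G) (hG : ∀ γ ∈ G, ∑ i, γ i = n) :
    (#P : ℝ) ≤ Real.exp n * #G := by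
  have hfiber (γ) (hγ : γ ∈ G) : (#{p ∈ P | p.1 + p.2 = γ} : ℝ) ≤ Real.exp n := by
    calc (#{p ∈ P | p.1 + p.2 = γ} : ℝ) ≤ ∏ i, (1 + (γ i : ℝ)) := by
          exact_mod_cast (card_le_prod_add_one_of_forall_add_eq fun p hp =>
            (mem_filter.1 hp).2).trans_eq (prod_congr rfl fun i _ => add_comm _ _)
      _ ≤ Real.exp (∑ i, (γ i : ℝ)) := Real.prod_one_add_le_exp_sum _ fun i => Nat.cast_nonneg _
      _ = Real.exp n := by rw [← Nat.cast_sum, hG γ hγ]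
  calc (#P : ℝ) = ∑ γ ∈ G, (#{p ∈ P | p.1 + p.2 = γ} : ℝ) := by
        exact_mod_cast card_eq_sum_card_fiberwise hPG
    _ ≤ ∑ _γ ∈ G, Real.exp n := sum_le_sum hfiber
    _ = Real.exp n * #G := by rw [sum_const, nsmul_eq_mul, mul_comm]

end PairsWithSum

theorem mem_Bdm {d m : ℕ} {p : (Fin d → ℕ) × (Fin d → ℕ)} :
    p ∈ Bdm d m ↔ ∑ i, p.1 i = m ∧ ∑ i, p.2 i = m ∧ ∀ i, p.1 i + p.2 i ≠ 1 := by
  simp [Bdm, Nat.mem_antidiagonalTuple, and_assoc]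

theorem add_mem_oneFreeTuples_of_mem_Bdm {d m : ℕ} {p : (Fin d → ℕ) × (Fin d → ℕ)}
    (hp : p ∈ Bdm d m) : p.1 + p.2 ∈ oneFreeTuples (Fin d) (2 * m) := by
  obtain ⟨h1, h2, h3⟩ := mem_Bdm.1 hp
  rw [mem_oneFreeTuples]
  simp only [Pi.add_apply, sum_add_distrib, h1, h2]
  exact ⟨by ring, h3⟩

theorem surjOn_add_Bdm (d m : ℕ) :
    Set.SurjOn (fun p : (Fin d → ℕ) × (Fin d → ℕ) => p.1 + p.2) ↑(Bdm d m)
      ↑(oneFreeTuples (Fin d) (2 * m)) := by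
  intro γ hγ
  obtain ⟨hsum, hne⟩ := mem_oneFreeTuples.1 hγ
  obtain ⟨α, hαγ, hα⟩ := exists_le_sum_eq univ γ (n := m) (by omega)
  refine ⟨(α, γ - α), mem_Bdm.2 ⟨hα, ?_, fun i => ?_⟩, add_tsub_cancel_of_le hαγ⟩
  · simp only [Pi.sub_apply]
    rw [sum_tsub_distrib _ fun i _ => hαγ i]
    omega
  · have := hαγ i
    simpa [add_tsub_cancel_of_le this] using hne i

theorem Sdm_eq_card_oneFreeTuples {d m : ℕ} (hm : 1 ≤ m) :
    Sdm d m = #(oneFreeTuples (Fin d) (2 * m)) := by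
  rw [card_oneFreeTuples (by omega), Fintype.card_fin, Sdm]
  refine sum_subset (Icc_subset_Icc_right (min_le_left d m)) fun k hk hk' => ?_
  simp only [mem_Icc, le_min_iff, not_and_or, not_le] at hk hk'
  rw [Nat.choose_eq_zero_of_lt (n := 2 * m - k - 1) (by omega), mul_zero]

theorem card_Bdm_bounds_general (d m : ℕ) (hm : 1 ≤ m) :
    (Sdm d m : ℝ) ≤ ((Bdm d m).card : ℝ) ∧
    ((Bdm d m).card : ℝ) ≤ Real.exp (2 * m) * (Sdm d m : ℝ) := by
  rw [Sdm_eq_card_oneFreeTuples hm]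
  refine ⟨by exact_mod_cast card_le_card_of_surjOn _ (surjOn_add_Bdm d m), ?_⟩
  exact_mod_cast card_le_exp_mul_card_of_forall_add_mem
    (fun _ => add_mem_oneFreeTuples_of_mem_Bdm) fun _ hγ => (mem_oneFreeTuples.1 hγ).1

theorem card_Bdm_bounds (d m : ℕ) (hd : 1 ≤ d) (hm : 1 ≤ m) :
    (Sdm d m : ℝ) ≤ ((Bdm d m).card : ℝ) ∧
    ((Bdm d m).card : ℝ) ≤ Real.exp (2 * m) * (Sdm d m : ℝ) :=
  card_Bdm_bounds_general d m hm
end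

section
/- Fix a positive integer n. There exists a polynomial p with integer coefficients of degree 2n, depending only on n, such that for every positive integer d, the number of bad tuples (j¹, j², j³, j⁴) with j^1_0 = j^2_0 = j^3_0 = j^4_0 = 1 equals p(d); moreover, this number is at most 3^n · d^{2n} for every d ≥ 1. -/
/-!
STATEMENT 5: Fix a positive integer `n`. There exists a polynomial `p` with integer
coefficients of degree `2n`, depending only on `n`, such that for every positive integer `d`,
the number of bad tuples `(j¹, j², j³, j⁴)` (sequences of length `n+1` with entries in
`{1, …, d}`) with `j^k_0 = 1` for all `k` equals `p(d)`; moreover this number is at most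
`3^n · d^{2n}`.
-/

/-- At one step, the four pairs of consecutive values can be split into two disjoint pairs
that agree both at time `i` and at time `i+1`. -/
def StepOK (u v : Fin 4 → ℕ) : Prop :=
  ∃ p q r s : Fin 4, ({p, q, r, s} : Finset (Fin 4)) = Finset.univ ∧
    u p = u q ∧ v p = v q ∧ u r = u s ∧ v r = v s

/-- A tuple of four sequences `j k : Fin (n+1) → ℕ` is bad if the pairing condition holds
at every step `i ∈ {0, …, n−1}`. -/
def IsBad (n : ℕ) (j : Fin 4 → Fin (n + 1) → ℕ) : Prop :=
  ∀ i : Fin n, StepOK (fun k => j k i.castSucc) (fun k => j k i.succ)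

/-- The number of bad tuples with entries in `{1, …, d}` starting with `j^k_0 = 1`
for all `k ∈ {1,2,3,4}`. -/
noncomputable def badCountOne (n d : ℕ) : ℕ :=
  Nat.card {j : Fin 4 → Fin (n + 1) → ℕ //
    (∀ k i, j k i ∈ Finset.Icc 1 d) ∧ IsBad n j ∧ (∀ k, j k 0 = 1)}

/-!
Read a bad tuple as a walk `w 0, …, w n` in `{1,…,d}⁴` whose consecutive states satisfy `StepOK`.
Every state of such a walk is either collapsed (all four coordinates equal) or split (two pairs
with distinct values, in one of three pairings). A collapsed state has `d` collapsed and
`3(d² - d)` split successors; a split state has `d` collapsed successors and `d² - d` split ones,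
namely those with the same pairing. Hence the number `t` of walks and `c = 3·#collapsed + #split`
satisfy `t' = d t + (d² - d) c` and `c' = 3d t + (d² - d) c`, with `t = 1`, `c = 3` at `n = 0`.
Inductively `c` is a polynomial of degree `2n` with leading coefficient 3, which makes
`(d² - d) c` the dominant term of both recursions; and `c ≤ 3t` gives `t' ≤ 3d² t`.
-/

open Finset Polynomial

section ChainWalks

variable {α : Type*} [DecidableEq α] (R : α → α → Prop) [DecidableRel R] (B : Finset α) (s : α)

def chainWalks (n : ℕ) : Finset (Fin (n + 1) → α) :=
  {w ∈ Fintype.piFinset fun _ => B | (∀ i : Fin n, R (w i.castSucc) (w i.succ)) ∧ w 0 = s}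

variable {R B s}

theorem mem_chainWalks {n : ℕ} {w : Fin (n + 1) → α} :
    w ∈ chainWalks R B s n ↔
      (∀ i, w i ∈ B) ∧ (∀ i : Fin n, R (w i.castSucc) (w i.succ)) ∧ w 0 = s := by
  rw [chainWalks, mem_filter, Fintype.mem_piFinset]

theorem chainWalks_zero (hs : s ∈ B) : chainWalks R B s 0 = {fun _ => s} := by
  ext w
  rw [mem_chainWalks, mem_singleton]
  constructor
  · rintro ⟨-, -, h0⟩
    funext i
    rwa [Fin.fin_one_eq_zero i]
  · rintro rfl
    exact ⟨fun _ => hs, finZeroElim, rfl⟩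

theorem snoc_mem_chainWalks_iff {n : ℕ} {w : Fin (n + 1) → α} {v : α} :
    Fin.snoc w v ∈ chainWalks R B s (n + 1) ↔
      w ∈ chainWalks R B s n ∧ v ∈ B ∧ R (w (Fin.last n)) v := by
  simp only [mem_chainWalks, Fin.forall_fin_succ' (n := n), Fin.forall_fin_succ' (n := n + 1),
    Fin.snoc_castSucc, Fin.snoc_last, Fin.succ_castSucc, Fin.succ_last]
  rw [show (0 : Fin (n + 2)) = Fin.castSucc 0 from rfl, Fin.snoc_castSucc]
  tauto

theorem rel_last_self_of_mem_chainWalks (hs : R s s) (hR : ∀ u v, R u v → R v v) {n : ℕ}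
    {w : Fin (n + 1) → α} (hw : w ∈ chainWalks R B s n) : R (w (Fin.last n)) (w (Fin.last n)) := by
  obtain ⟨-, hchain, h0⟩ := mem_chainWalks.mp hw
  cases n with
  | zero => exact h0 ▸ hs
  | succ m => exact hR _ _ (Fin.succ_last m ▸ hchain (Fin.last m))

theorem card_filter_chainWalks_succ (P : α → Prop) [DecidablePred P] (n : ℕ) :
    #{w ∈ chainWalks R B s (n + 1) | P (w (Fin.last (n + 1)))} =
      ∑ w ∈ chainWalks R B s n, #{v ∈ B | R (w (Fin.last n)) v ∧ P v} := by
  have hinit : ∀ w ∈ {w ∈ chainWalks R B s (n + 1) | P (w (Fin.last (n + 1)))},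
      Fin.init w ∈ chainWalks R B s n := fun w hw => by
    rw [mem_filter, ← Fin.snoc_init_self w, snoc_mem_chainWalks_iff] at hw
    exact hw.1.1
  rw [card_eq_sum_card_fiberwise hinit]
  refine sum_congr rfl fun w hw =>
    card_nbij' (· (Fin.last _)) (Fin.snoc (α := fun _ => α) w) ?_ ?_ ?_ ?_
  · intro u hu
    simp only [mem_coe, mem_filter] at hu ⊢
    obtain ⟨⟨hu, hP⟩, rfl⟩ := hu
    rw [← Fin.snoc_init_self u, snoc_mem_chainWalks_iff] at hu
    exact ⟨hu.2.1, hu.2.2, hP⟩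
  · intro v hv
    simp only [mem_coe, mem_filter, Fin.snoc_last, Fin.init_snoc] at hv ⊢
    exact ⟨⟨snoc_mem_chainWalks_iff.mpr ⟨hw, hv.1, hv.2.1⟩, hv.2.2⟩, trivial⟩
  · intro u hu
    simp only [mem_coe, mem_filter] at hu
    rw [← hu.2, Fin.snoc_init_self]
  · intro v _
    exact Fin.snoc_last (α := fun _ => α) _ _

end ChainWalks

section BadWalks

instance (u v : Fin 4 → ℕ) : Decidable (StepOK u v) := by
  unfold StepOK
  infer_instance

theorem stepOK_iff (u v : Fin 4 → ℕ) : StepOK u v ↔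
    (u 0 = u 1 ∧ u 2 = u 3 ∧ v 0 = v 1 ∧ v 2 = v 3) ∨
    (u 0 = u 2 ∧ u 1 = u 3 ∧ v 0 = v 2 ∧ v 1 = v 3) ∨
    (u 0 = u 3 ∧ u 1 = u 2 ∧ v 0 = v 3 ∧ v 1 = v 2) := by
  constructor
  · rintro ⟨p, q, r, s, huniv, h1, h2, h3, h4⟩
    fin_cases p <;> fin_cases q <;> fin_cases r <;> fin_cases s <;>
      first
        | exact absurd huniv (by decide)
        | (simp only [Fin.zero_eta, Fin.mk_one, Fin.reduceFinMk] at h1 h2 h3 h4; omega)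
  · rintro (⟨h1, h2, h3, h4⟩ | ⟨h1, h2, h3, h4⟩ | ⟨h1, h2, h3, h4⟩)
    · exact ⟨0, 1, 2, 3, by decide, h1, h3, h2, h4⟩
    · exact ⟨0, 2, 1, 3, by decide, h1, h3, h2, h4⟩
    · exact ⟨0, 3, 1, 2, by decide, h1, h3, h2, h4⟩

theorem StepOK.self_right {u v : Fin 4 → ℕ} (h : StepOK u v) : StepOK v v := by
  obtain ⟨p, q, r, s, huniv, -, hpq, -, hrs⟩ := h
  exact ⟨p, q, r, s, huniv, hpq, hpq, hrs, hrs⟩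

def AllEq (v : Fin 4 → ℕ) : Prop := ∀ k, v k = v 0

instance : DecidablePred AllEq := fun v => inferInstanceAs (Decidable (∀ k, v k = v 0))

theorem allEq_iff (v : Fin 4 → ℕ) : AllEq v ↔ v 1 = v 0 ∧ v 2 = v 0 ∧ v 3 = v 0 := by
  refine ⟨fun h => ⟨h 1, h 2, h 3⟩, fun ⟨h1, h2, h3⟩ k => ?_⟩
  fin_cases k
  exacts [rfl, h1, h2, h3]

def stateBox (d : ℕ) : Finset (Fin 4 → ℕ) := Fintype.piFinset fun _ => Icc 1 d

theorem mem_stateBox {d : ℕ} {v : Fin 4 → ℕ} : v ∈ stateBox d ↔ ∀ k, v k ∈ Icc 1 d :=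
  Fintype.mem_piFinset

theorem card_filter_allEq_stateBox (d : ℕ) : #{v ∈ stateBox d | AllEq v} = d := by
  refine (card_nbij' (t := Icc 1 d) (· 0) (fun x _ => x) ?_ ?_ ?_ ?_).trans (by simp)
  · intro v hv
    simp only [mem_coe, mem_filter, mem_stateBox] at hv
    exact hv.1 0
  · intro x hx
    simp only [mem_coe, mem_filter, mem_stateBox]
    exact ⟨fun _ => hx, fun _ => rfl⟩
  · intro v hv
    simp only [mem_coe, mem_filter] at hv
    funext k
    exact (hv.2 k).symm
  · intro x _
    rfl

theorem card_filter_pairPattern_stateBox (d : ℕ) (a b c e : Fin 4)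
    (h : ({a, b, c, e} : Finset (Fin 4)) = univ) :
    #{v ∈ stateBox d | v a = v b ∧ v c = v e ∧ v a ≠ v c} = d ^ 2 - d := by
  obtain ⟨⟨hab, hac, hae, hbc, hbe, hce⟩, hcover⟩ :
      (a ≠ b ∧ a ≠ c ∧ a ≠ e ∧ b ≠ c ∧ b ≠ e ∧ c ≠ e) ∧
        ∀ k, k = a ∨ k = b ∨ k = c ∨ k = e := by
    revert a b c e
    decide
  have hc : ¬(c = a ∨ c = b) := by rintro (rfl | rfl) <;> simp_all
  have he : ¬(e = a ∨ e = b) := by rintro (rfl | rfl) <;> simp_all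
  refine (card_nbij' (t := (Icc 1 d).offDiag) (fun v => (v a, v c))
    (fun p k => if k = a ∨ k = b then p.1 else p.2) ?_ ?_ ?_ ?_).trans
    (by simp [offDiag_card, sq])
  · intro v hv
    simp only [mem_coe, mem_filter, mem_stateBox, mem_offDiag] at hv ⊢
    exact ⟨hv.1 a, hv.1 c, hv.2.2.2⟩
  · intro p hp
    simp only [mem_coe, mem_filter, mem_stateBox, mem_offDiag] at hp ⊢
    refine ⟨fun k => ?_, by simp, by simp [hc, he], by simpa [hc] using hp.2.2⟩
    split_ifs
    exacts [hp.1, hp.2.1]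
  · intro v hv
    simp only [mem_coe, mem_filter] at hv
    funext k
    rcases hcover k with rfl | rfl | rfl | rfl <;> simp_all
  · intro p _
    simp [hc]

theorem card_filter_stepOK_allEq_stateBox (d : ℕ) {u : Fin 4 → ℕ} (hu : StepOK u u) :
    #{v ∈ stateBox d | StepOK u v ∧ AllEq v} = d := by
  have hstep (v : Fin 4 → ℕ) (hv : AllEq v) : StepOK u v := by
    obtain ⟨p, q, r, s, huniv, hpq, -, hrs, -⟩ := hu
    exact ⟨p, q, r, s, huniv, hpq, (hv p).trans (hv q).symm, hrs, (hv r).trans (hv s).symm⟩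
  rw [filter_congr fun v _ => and_iff_right_of_imp (hstep v)]
  exact card_filter_allEq_stateBox d

theorem card_filter_stepOK_not_allEq_stateBox_of_allEq (d : ℕ) {u : Fin 4 → ℕ} (hu : AllEq u) :
    #{v ∈ stateBox d | StepOK u v ∧ ¬AllEq v} = 3 * (d ^ 2 - d) := by
  rw [allEq_iff] at hu
  have hsplit : ∀ v, StepOK u v ∧ ¬AllEq v ↔
      (v 0 = v 1 ∧ v 2 = v 3 ∧ v 0 ≠ v 2) ∨ (v 0 = v 2 ∧ v 1 = v 3 ∧ v 0 ≠ v 1) ∨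
        (v 0 = v 3 ∧ v 1 = v 2 ∧ v 0 ≠ v 1) := by
    intro v
    rw [stepOK_iff, allEq_iff]
    omega
  rw [filter_congr fun v _ => hsplit v, filter_or, filter_or, card_union_of_disjoint,
    card_union_of_disjoint, card_filter_pairPattern_stateBox d 0 1 2 3 (by decide),
    card_filter_pairPattern_stateBox d 0 2 1 3 (by decide),
    card_filter_pairPattern_stateBox d 0 3 1 2 (by decide)]
  · ring
  all_goals
    simp only [disjoint_left, mem_union, mem_filter]
    omega

theorem card_filter_stepOK_not_allEq_stateBox_of_not_allEq (d : ℕ) {u : Fin 4 → ℕ}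
    (hu : StepOK u u) (hne : ¬AllEq u) :
    #{v ∈ stateBox d | StepOK u v ∧ ¬AllEq v} = d ^ 2 - d := by
  rw [allEq_iff] at hne
  obtain ⟨a, b, c, e, hpart, hext⟩ : ∃ a b c e : Fin 4, ({a, b, c, e} : Finset (Fin 4)) = univ ∧
      ∀ v, StepOK u v ∧ ¬AllEq v ↔ v a = v b ∧ v c = v e ∧ v a ≠ v c := by
    rw [stepOK_iff] at hu
    rcases hu with ⟨h1, h2, -⟩ | ⟨h1, h2, -⟩ | ⟨h1, h2, -⟩
    · exact ⟨0, 1, 2, 3, by decide, fun v => by rw [stepOK_iff, allEq_iff]; omega⟩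
    · exact ⟨0, 2, 1, 3, by decide, fun v => by rw [stepOK_iff, allEq_iff]; omega⟩
    · exact ⟨0, 3, 1, 2, by decide, fun v => by rw [stepOK_iff, allEq_iff]; omega⟩
  rw [filter_congr fun v _ => hext v]
  exact card_filter_pairPattern_stateBox d a b c e hpart

def badWalks (n d : ℕ) : Finset (Fin (n + 1) → Fin 4 → ℕ) := chainWalks StepOK (stateBox d) 1 n

theorem badCountOne_eq_card_badWalks (n d : ℕ) : badCountOne n d = #(badWalks n d) := by
  rw [badCountOne, ← Nat.card_eq_finsetCard]
  refine Nat.card_congr (Equiv.subtypeEquiv (Equiv.piComm _) fun j => ?_)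
  rw [badWalks, mem_chainWalks]
  simp only [mem_stateBox, Equiv.piComm_apply, IsBad, funext_iff, Function.swap, Pi.one_apply]
  exact and_congr forall_comm Iff.rfl

theorem badWalks_zero {d : ℕ} (hd : 1 ≤ d) : badWalks 0 d = {1} :=
  chainWalks_zero (mem_stateBox.mpr fun _ => mem_Icc.mpr ⟨le_rfl, hd⟩)

theorem stepOK_last_self_of_mem_badWalks {n d : ℕ} {w : Fin (n + 1) → Fin 4 → ℕ}
    (hw : w ∈ badWalks n d) : StepOK (w (Fin.last n)) (w (Fin.last n)) :=
  rel_last_self_of_mem_chainWalks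
    (show StepOK 1 1 from ⟨0, 1, 2, 3, by decide, rfl, rfl, rfl, rfl⟩)
    (fun _ _ => StepOK.self_right) hw

def collapsedCount (n d : ℕ) : ℕ := #{w ∈ badWalks n d | AllEq (w (Fin.last n))}

def splitCount (n d : ℕ) : ℕ := #{w ∈ badWalks n d | ¬AllEq (w (Fin.last n))}

theorem collapsedCount_add_splitCount (n d : ℕ) :
    collapsedCount n d + splitCount n d = #(badWalks n d) :=
  card_filter_add_card_filter_not _

theorem collapsedCount_zero {d : ℕ} (hd : 1 ≤ d) : collapsedCount 0 d = 1 := by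
  rw [collapsedCount, badWalks_zero hd, filter_singleton, if_pos, card_singleton]
  exact fun _ => rfl

theorem splitCount_zero {d : ℕ} (hd : 1 ≤ d) : splitCount 0 d = 0 := by
  have h := collapsedCount_add_splitCount 0 d
  rwa [collapsedCount_zero hd, badWalks_zero hd, card_singleton, add_eq_left] at h

theorem collapsedCount_succ (n d : ℕ) : collapsedCount (n + 1) d = d * #(badWalks n d) := by
  rw [collapsedCount, badWalks, card_filter_chainWalks_succ, ← badWalks,
    sum_congr rfl fun w hw =>
      card_filter_stepOK_allEq_stateBox d (stepOK_last_self_of_mem_badWalks hw),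
    sum_const, smul_eq_mul, mul_comm]

theorem splitCount_succ (n d : ℕ) :
    splitCount (n + 1) d = (d ^ 2 - d) * (3 * collapsedCount n d + splitCount n d) := by
  have hext : ∀ w ∈ badWalks n d,
      #{v ∈ stateBox d | StepOK (w (Fin.last n)) v ∧ ¬AllEq v} =
        if AllEq (w (Fin.last n)) then 3 * (d ^ 2 - d) else d ^ 2 - d := by
    intro w hw
    split_ifs with h
    · exact card_filter_stepOK_not_allEq_stateBox_of_allEq d h
    · exact card_filter_stepOK_not_allEq_stateBox_of_not_allEq d
        (stepOK_last_self_of_mem_badWalks hw) h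
  rw [splitCount, badWalks, card_filter_chainWalks_succ (P := fun v => ¬AllEq v), ← badWalks,
    sum_congr rfl hext, sum_ite, sum_const, sum_const, smul_eq_mul, smul_eq_mul,
    ← collapsedCount, ← splitCount]
  ring

theorem card_badWalks_succ (n d : ℕ) : #(badWalks (n + 1) d) =
    d * #(badWalks n d) + (d ^ 2 - d) * (3 * collapsedCount n d + splitCount n d) := by
  rw [← collapsedCount_add_splitCount, collapsedCount_succ, splitCount_succ]

theorem card_badWalks_le {d : ℕ} (hd : 1 ≤ d) (n : ℕ) :
    #(badWalks n d) ≤ 3 ^ n * d ^ (2 * n) := by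
  induction n with
  | zero => simp [badWalks_zero hd]
  | succ n ih =>
    have hc : 3 * collapsedCount n d + splitCount n d ≤ 3 * #(badWalks n d) := by
      rw [← collapsedCount_add_splitCount]
      omega
    calc #(badWalks (n + 1) d)
        = d * #(badWalks n d) + (d ^ 2 - d) * (3 * collapsedCount n d + splitCount n d) :=
          card_badWalks_succ n d
      _ ≤ d * #(badWalks n d) + (d ^ 2 - d) * (3 * #(badWalks n d)) := by gcongr
      _ ≤ 3 * d ^ 2 * #(badWalks n d) := by
          obtain ⟨e, he⟩ : ∃ e, d ^ 2 = e + d :=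
            ⟨d ^ 2 - d, (Nat.sub_add_cancel (Nat.le_self_pow two_ne_zero d)).symm⟩
          rw [he, Nat.add_sub_cancel]
          nlinarith [Nat.zero_le (d * #(badWalks n d))]
      _ ≤ 3 * d ^ 2 * (3 ^ n * d ^ (2 * n)) := by gcongr
      _ = 3 ^ (n + 1) * d ^ (2 * (n + 1)) := by ring

end BadWalks

section BadPoly

theorem natDegree_add_X_sq_sub_X_mul {R : Type*} [CommRing R] [Nontrivial R] {p q : R[X]}
    (hq : q ≠ 0) (hp : p.natDegree ≤ q.natDegree + 1) :
    (p + (X ^ 2 - X) * q).natDegree = q.natDegree + 2 ∧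
      (p + (X ^ 2 - X) * q).leadingCoeff = q.leadingCoeff := by
  have hmonic : (X ^ 2 - X : R[X]).Monic :=
    monic_X_pow_sub (by rw [degree_X]; exact_mod_cast one_lt_two)
  have hdeg : ((X ^ 2 - X) * q).natDegree = q.natDegree + 2 := by
    rw [hmonic.natDegree_mul' hq, add_comm]
    congr 1
    compute_degree!
  have hlt : p.natDegree < ((X ^ 2 - X) * q).natDegree := by omega
  refine ⟨by rw [natDegree_add_eq_right_of_natDegree_lt hlt, hdeg], ?_⟩
  rw [leadingCoeff_add_of_degree_lt (degree_lt_degree hlt), leadingCoeff_monic_mul hmonic]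

noncomputable def badPoly : ℕ → ℤ[X] × ℤ[X]
  | 0 => (1, C 3)
  | n + 1 => (X * (badPoly n).1 + (X ^ 2 - X) * (badPoly n).2,
      C 3 * X * (badPoly n).1 + (X ^ 2 - X) * (badPoly n).2)

theorem eval_badPoly {d : ℕ} (hd : 1 ≤ d) (n : ℕ) :
    (#(badWalks n d) : ℤ) = (badPoly n).1.eval (d : ℤ) ∧
      ((3 * collapsedCount n d + splitCount n d : ℕ) : ℤ) = (badPoly n).2.eval (d : ℤ) := by
  induction n with
  | zero => simp [badPoly, badWalks_zero hd, collapsedCount_zero hd, splitCount_zero hd]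
  | succ n ih =>
    rw [card_badWalks_succ, collapsedCount_succ, splitCount_succ]
    simp only [badPoly, eval_add, eval_mul, eval_sub, eval_pow, eval_X, eval_C]
    push_cast [Nat.cast_sub (Nat.le_self_pow two_ne_zero d)]
    rw [← ih.1, ← ih.2, ← collapsedCount_add_splitCount]
    push_cast
    constructor <;> ring

theorem natDegree_badPoly (n : ℕ) : (badPoly n).1.natDegree = 2 * n ∧
    (badPoly n).2.natDegree = 2 * n ∧ (badPoly n).2.leadingCoeff = 3 := by
  induction n with
  | zero => exact ⟨natDegree_one, natDegree_C 3, leadingCoeff_C 3⟩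
  | succ n ih =>
    obtain ⟨h1, h2, hlc⟩ := ih
    have hq : (badPoly n).2 ≠ 0 := fun h => by simp [h] at hlc
    have hX : (X * (badPoly n).1).natDegree ≤ (badPoly n).2.natDegree + 1 :=
      natDegree_mul_le.trans (by rw [natDegree_X]; omega)
    have h3X : (C 3 * X * (badPoly n).1).natDegree ≤ (badPoly n).2.natDegree + 1 :=
      natDegree_mul_le.trans (add_le_add (by compute_degree) h1.le) |>.trans (by omega)
    obtain ⟨hdeg1, -⟩ := natDegree_add_X_sq_sub_X_mul hq hX
    obtain ⟨hdeg2, hlc2⟩ := natDegree_add_X_sq_sub_X_mul hq h3X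
    simp only [badPoly]
    refine ⟨?_, ?_, ?_⟩ <;> simp only [hdeg1, hdeg2, hlc2, hlc, h2] <;> ring

end BadPoly

theorem badCountOne_poly_and_bound_general (n : ℕ) :
    ∃ p : Polynomial ℤ, p.natDegree = 2 * n ∧
      (∀ d : ℕ, 1 ≤ d → (badCountOne n d : ℤ) = p.eval (d : ℤ)) ∧
      (∀ d : ℕ, 1 ≤ d → badCountOne n d ≤ 3 ^ n * d ^ (2 * n)) := by
  refine ⟨(badPoly n).1, (natDegree_badPoly n).1, fun d hd => ?_, fun d hd => ?_⟩
  · rw [badCountOne_eq_card_badWalks]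
    exact (eval_badPoly hd n).1
  · rw [badCountOne_eq_card_badWalks]
    exact card_badWalks_le hd n

theorem badCountOne_poly_and_bound (n : ℕ) (hn : 1 ≤ n) :
    ∃ p : Polynomial ℤ, p.natDegree = 2 * n ∧
      (∀ d : ℕ, 1 ≤ d → (badCountOne n d : ℤ) = p.eval (d : ℤ)) ∧
      (∀ d : ℕ, 1 ≤ d → badCountOne n d ≤ 3 ^ n * d ^ (2 * n)) :=
  badCountOne_poly_and_bound_general n
end

section
/- Let d and m be positive integers and let X₁, …, X_d be independent real random variables with E[X_j^{4m}] < ∞ for every j. Then Var( Σ_{α∈T(d,m)} (X^α)² ) ≤ |A_d^m| · max_{1≤j≤d} E[X_j^{4m}], where X^α = X₁^{α₁} ⋯ X_d^{α_d}. -/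
/-!
Write `Y_α = (X^α)²`, so that the variance is `∑_{α,β} cov(Y_α, Y_β)`. When `α` and `β` share no
variable, `Y_α` and `Y_β` are functions of disjoint families of the independent `X_j`, so their
covariance vanishes; the remaining pairs form `A_d^m`. For those,
`2 cov(Y_α, Y_β) ≤ Var Y_α + Var Y_β ≤ E[Y_α²] + E[Y_β²]`, and weighted AM-GM with weights
`α_j / m` gives `Y_α² = ∏ (X_j⁴)^{α_j} ≤ ∑ (α_j / m) X_j^{4m}`, whose expectation is at most
`max_j E[X_j^{4m}]`.
-/

open MeasureTheory ProbabilityTheory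

open Finset

theorem Real.prod_pow_le_sum_mul_pow {ι : Type*} (s : Finset ι) {y : ι → ℝ}
    (hy : ∀ i ∈ s, 0 ≤ y i) {γ : ι → ℕ} {n : ℕ} (hn : n ≠ 0) (hγ : ∑ i ∈ s, γ i = n) :
    ∏ i ∈ s, y i ^ γ i ≤ ∑ i ∈ s, ((γ i : ℝ) / n) * y i ^ n := by
  have hn' : (n : ℝ) ≠ 0 := Nat.cast_ne_zero.mpr hn
  calc ∏ i ∈ s, y i ^ γ i = ∏ i ∈ s, (y i ^ n) ^ ((γ i : ℝ) / n) := by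
        refine prod_congr rfl fun i hi => ?_
        rw [← Real.rpow_natCast, ← Real.rpow_natCast, ← Real.rpow_mul (hy i hi),
          mul_div_cancel₀ _ hn']
    _ ≤ _ := Real.geom_mean_le_arith_mean_weighted s _ _ (fun i _ => by positivity)
        (by rw [← sum_div, ← Nat.cast_sum, hγ, div_self hn'])
        (fun i hi => pow_nonneg (hy i hi) n)

theorem prod_pow_pow_le_of_even {ι : Type*} [Fintype ι] (x : ι → ℝ) {α : ι → ℕ} {m : ℕ}
    (hm : m ≠ 0) (hα : ∑ i, α i = m) {p : ℕ} (hp : Even p) :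
    (∏ i, x i ^ α i) ^ p ≤ ∑ i, ((α i : ℝ) / m) * x i ^ (p * m) := by
  calc (∏ i, x i ^ α i) ^ p = ∏ i, (x i ^ p) ^ α i := by
        rw [← prod_pow]; exact prod_congr rfl fun i _ => by ring
    _ ≤ ∑ i, ((α i : ℝ) / m) * (x i ^ p) ^ m :=
        Real.prod_pow_le_sum_mul_pow _ (fun i _ => hp.pow_nonneg _) hm hα
    _ = _ := by simp_rw [← pow_mul]

theorem ProbabilityTheory.two_mul_covariance_le_variance_add_variance {Ω : Type*}
    [MeasurableSpace Ω] {μ : Measure Ω} [IsFiniteMeasure μ] {X Y : Ω → ℝ} (hX : MemLp X 2 μ)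
    (hY : MemLp Y 2 μ) :
    2 * cov[X, Y; μ] ≤ Var[X; μ] + Var[Y; μ] := by
  have := variance_nonneg (X - Y) μ
  rw [variance_sub hX hY] at this
  linarith

theorem ProbabilityTheory.iIndepFun.indepFun_finsetProd_comp {Ω ι β γ : Type*}
    [MeasurableSpace Ω] {μ : Measure Ω} [MeasurableSpace β] [CommMonoid γ]
    [MeasurableSpace γ] [MeasurableMul₂ γ] {f : ι → Ω → β} (hf : iIndepFun f μ)
    (hmeas : ∀ i, Measurable (f i)) {S T : Finset ι} (hST : Disjoint S T) {g h : ι → β → γ}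
    (hg : ∀ i, Measurable (g i)) (hh : ∀ i, Measurable (h i)) :
    IndepFun (fun ω => ∏ i ∈ S, g i (f i ω)) (fun ω => ∏ i ∈ T, h i (f i ω)) μ := by
  have := (hf.indepFun_finset S T hST hmeas).comp
    (φ := fun x : S → β => ∏ i : S, g i (x i)) (ψ := fun x : T → β => ∏ i : T, h i (x i))
    (Finset.measurable_prod _ fun i _ => (hg i).comp (measurable_pi_apply i))
    (Finset.measurable_prod _ fun i _ => (hh i).comp (measurable_pi_apply i))
  convert this using 1 <;> ext ω <;> exact (prod_coe_sort _ _).symm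

theorem ProbabilityTheory.iIndepFun.indepFun_prod_pow {Ω ι : Type*} [Fintype ι]
    [MeasurableSpace Ω] {μ : Measure Ω} {X : ι → Ω → ℝ} (hX : iIndepFun X μ)
    (hmeas : ∀ i, Measurable (X i)) {α β : ι → ℕ} (hαβ : ∀ i, α i = 0 ∨ β i = 0) :
    IndepFun (fun ω => ∏ i, X i ω ^ α i) (fun ω => ∏ i, X i ω ^ β i) μ := by
  classical
  have hsupp (γ : ι → ℕ) (ω : Ω) :
      ∏ i ∈ univ.filter (γ · ≠ 0), X i ω ^ γ i = ∏ i, X i ω ^ γ i :=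
    prod_filter_of_ne fun i _ h hi => h (by rw [hi, pow_zero])
  have hdisj : Disjoint (univ.filter (α · ≠ 0)) (univ.filter (β · ≠ 0)) := by
    rw [disjoint_filter]; intro i _ hα hβ; rcases hαβ i with h | h <;> contradiction
  simpa only [hsupp] using hX.indepFun_finsetProd_comp hmeas hdisj
    (g := fun i x => x ^ α i) (h := fun i x => x ^ β i) (by fun_prop) (by fun_prop)

section Moments

variable {Ω ι : Type*} [MeasurableSpace Ω] {μ : Measure Ω} [Fintype ι] {X : ι → Ω → ℝ}
  {m p : ℕ} {α β : ι → ℕ}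

theorem integrable_prod_pow_pow_of_even (hmeas : ∀ i, Measurable (X i))
    (hint : ∀ i, Integrable (fun ω => X i ω ^ (p * m)) μ) (hp : Even p) (hm : m ≠ 0)
    (hα : ∑ i, α i = m) :
    Integrable (fun ω => (∏ i, X i ω ^ α i) ^ p) μ := by
  refine (integrable_finsetSum univ fun i _ => (hint i).const_mul ((α i : ℝ) / m)).mono'
    (by fun_prop) (ae_of_all _ fun ω => ?_)
  rw [Real.norm_of_nonneg (hp.pow_nonneg _)]
  exact prod_pow_pow_le_of_even _ hm hα hp

theorem integral_prod_pow_pow_le_of_even (hmeas : ∀ i, Measurable (X i))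
    (hint : ∀ i, Integrable (fun ω => X i ω ^ (p * m)) μ) (hp : Even p) (hm : m ≠ 0)
    (hα : ∑ i, α i = m) {M : ℝ} (hM : ∀ i, ∫ ω, X i ω ^ (p * m) ∂μ ≤ M) :
    ∫ ω, (∏ i, X i ω ^ α i) ^ p ∂μ ≤ M := by
  have hm' : (m : ℝ) ≠ 0 := Nat.cast_ne_zero.mpr hm
  calc ∫ ω, (∏ i, X i ω ^ α i) ^ p ∂μ
      ≤ ∫ ω, ∑ i, ((α i : ℝ) / m) * X i ω ^ (p * m) ∂μ :=
        integral_mono (integrable_prod_pow_pow_of_even hmeas hint hp hm hα)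
          (integrable_finsetSum univ fun i _ => (hint i).const_mul _)
          fun ω => prod_pow_pow_le_of_even _ hm hα hp
    _ = ∑ i, ((α i : ℝ) / m) * ∫ ω, X i ω ^ (p * m) ∂μ := by
        rw [integral_finsetSum univ fun i _ => (hint i).const_mul _]
        simp_rw [integral_const_mul]
    _ ≤ ∑ i, ((α i : ℝ) / m) * M := by gcongr with i; exact hM i
    _ = M := by rw [← sum_mul, ← sum_div, ← Nat.cast_sum, hα, div_self hm', one_mul]

theorem memLp_two_sq_prod_pow (hmeas : ∀ i, Measurable (X i))
    (hint : ∀ i, Integrable (fun ω => X i ω ^ (4 * m)) μ) (hm : m ≠ 0) (hα : ∑ i, α i = m) :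
    MemLp (fun ω => (∏ i, X i ω ^ α i) ^ 2) 2 μ := by
  rw [memLp_two_iff_integrable_sq (by fun_prop)]
  simpa only [← pow_mul] using integrable_prod_pow_pow_of_even hmeas hint (by decide) hm hα

theorem covariance_sq_prod_pow_eq_zero (hX : iIndepFun X μ) (hmeas : ∀ i, Measurable (X i))
    (hint : ∀ i, Integrable (fun ω => X i ω ^ (4 * m)) μ) (hm : m ≠ 0) (hα : ∑ i, α i = m)
    (hβ : ∑ i, β i = m) (hαβ : ∀ i, α i = 0 ∨ β i = 0) :
    cov[fun ω => (∏ i, X i ω ^ α i) ^ 2, fun ω => (∏ i, X i ω ^ β i) ^ 2; μ] = 0 :=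
  ((hX.indepFun_prod_pow hmeas hαβ).comp (measurable_id.pow_const 2)
    (measurable_id.pow_const 2)).covariance_eq_zero (memLp_two_sq_prod_pow hmeas hint hm hα)
    (memLp_two_sq_prod_pow hmeas hint hm hβ)

variable [IsProbabilityMeasure μ]

theorem variance_sq_prod_pow_le (hmeas : ∀ i, Measurable (X i))
    (hint : ∀ i, Integrable (fun ω => X i ω ^ (4 * m)) μ) (hm : m ≠ 0) (hα : ∑ i, α i = m)
    {M : ℝ} (hM : ∀ i, ∫ ω, X i ω ^ (4 * m) ∂μ ≤ M) :
    Var[fun ω => (∏ i, X i ω ^ α i) ^ 2; μ] ≤ M := by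
  refine (variance_le_expectation_sq (by fun_prop)).trans ?_
  simpa only [Pi.pow_apply, ← pow_mul] using
    integral_prod_pow_pow_le_of_even hmeas hint (by decide) hm hα hM

theorem covariance_sq_prod_pow_le (hmeas : ∀ i, Measurable (X i))
    (hint : ∀ i, Integrable (fun ω => X i ω ^ (4 * m)) μ) (hm : m ≠ 0) (hα : ∑ i, α i = m)
    (hβ : ∑ i, β i = m) {M : ℝ} (hM : ∀ i, ∫ ω, X i ω ^ (4 * m) ∂μ ≤ M) :
    cov[fun ω => (∏ i, X i ω ^ α i) ^ 2, fun ω => (∏ i, X i ω ^ β i) ^ 2; μ] ≤ M := by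
  have := two_mul_covariance_le_variance_add_variance (memLp_two_sq_prod_pow hmeas hint hm hα)
    (memLp_two_sq_prod_pow hmeas hint hm hβ)
  linarith [variance_sq_prod_pow_le hmeas hint hm hα hM,
    variance_sq_prod_pow_le hmeas hint hm hβ hM]

end Moments

theorem variance_sqNorm_le {Ω : Type*} [MeasurableSpace Ω]
    (μ : Measure Ω) [IsProbabilityMeasure μ]
    (d m : ℕ) (hd : 0 < d) (hm : 0 < m)
    (X : Fin d → Ω → ℝ)
    (hmeas : ∀ j, Measurable (X j))
    (hindep : iIndepFun X μ)
    (hint : ∀ j, Integrable (fun ω => (X j ω) ^ (4 * m)) μ) :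
    variance (fun ω => ∑ α ∈ Finset.Nat.antidiagonalTuple d m,
        (∏ j, (X j ω) ^ (α j)) ^ 2) μ
      ≤ ((Adm d m).card : ℝ) *
          Finset.univ.sup' (Finset.univ_nonempty_iff.mpr (Fin.pos_iff_nonempty.mp hd))
            (fun j => ∫ ω, (X j ω) ^ (4 * m) ∂μ) := by
  set T := Finset.Nat.antidiagonalTuple d m
  set M := Finset.univ.sup' _ fun j => ∫ ω, (X j ω) ^ (4 * m) ∂μ
  have hM (j : Fin d) : ∫ ω, X j ω ^ (4 * m) ∂μ ≤ M :=
    le_sup' (fun j => ∫ ω, X j ω ^ (4 * m) ∂μ) (mem_univ j)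
  have hT {α} (hα : α ∈ T) : ∑ i, α i = m := Finset.Nat.mem_antidiagonalTuple.mp hα
  have hmemLp {α} (hα : α ∈ T) := memLp_two_sq_prod_pow hmeas hint hm.ne' (hT hα)
  rw [← covariance_self (by fun_prop), covariance_fun_sum_fun_sum' (fun _ => hmemLp)
    (fun _ => hmemLp), ← sum_product']
  calc _ = ∑ p ∈ Adm d m, cov[fun ω => (∏ i, X i ω ^ p.1 i) ^ 2,
        fun ω => (∏ i, X i ω ^ p.2 i) ^ 2; μ] := by
        refine (sum_filter_of_ne fun p hp hne => ?_).symm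
        obtain ⟨hα, hβ⟩ := mem_product.mp hp
        by_contra! hdisj
        exact hne <| covariance_sq_prod_pow_eq_zero hindep hmeas hint hm.ne' (hT hα) (hT hβ)
          fun i => by have := hdisj i; omega
    _ ≤ (Adm d m).card * M := by
        refine (sum_le_card_nsmul _ _ M fun p hp => ?_).trans_eq (nsmul_eq_mul _ _)
        obtain ⟨hα, hβ⟩ := mem_product.mp (mem_filter.mp hp).1
        exact covariance_sq_prod_pow_le hmeas hint hm.ne' (hT hα) (hT hβ) hM
end

section
/- Let d and m be positive integers, let X₁, …, X_d be independent real random variables with E[X_j] = 0 and E[X_j^{2m}] < ∞ for every j, and let (X'₁, …, X'_d) be an independent copy of (X₁, …, X_d). Then E[( Σ_{α∈T(d,m)} X^α (X')^α )²] ≤ |B_d^m| · ( max_{1≤j≤d} E[X_j^{2m}] )², where X^α = X₁^{α₁} ⋯ X_d^{α_d}. -/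
/-!
Expanding the square and using that `X'` is an independent copy of `X`, the left side equals
`∑_{α,β ∈ T(d,m)} (E[X^(α+β)])²`. By independence `E[X^(α+β)] = ∏_j E[X_j^(α_j+β_j)]`, which
vanishes as soon as some `α_j + β_j = 1` since the `X_j` are centred, so only the pairs in
`B_d^m` contribute. For those, `∑_j (α_j + β_j) = 2m`, and Lyapunov's inequality
`E|X_j|^k ≤ (E X_j^(2m))^(k/2m)` bounds `|E[X^(α+β)]|` by the largest `2m`-th moment.
-/

open MeasureTheory ProbabilityTheory

lemma le_of_sum_eq {ι : Type*} [Fintype ι] {k : ι → ℕ} {n : ℕ} (hk : ∑ i, k i = n) (i : ι) :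
    k i ≤ n :=
  hk ▸ Finset.single_le_sum (fun _ _ => Nat.zero_le _) (Finset.mem_univ i)

lemma Finset.Nat.sum_add_eq_of_mem_antidiagonalTuple {d m : ℕ} {α β : Fin d → ℕ}
    (hα : α ∈ antidiagonalTuple d m) (hβ : β ∈ antidiagonalTuple d m) :
    ∑ j, (α j + β j) = 2 * m := by
  rw [Finset.sum_add_distrib, mem_antidiagonalTuple.mp hα, mem_antidiagonalTuple.mp hβ, two_mul]

section
variable {Ω : Type*} [MeasurableSpace Ω] {μ : Measure Ω}

section
variable {Y : Ω → ℝ} {k n : ℕ}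

lemma integrable_pow_of_le [IsFiniteMeasure μ] (hY : AEStronglyMeasurable Y μ) (hkn : k ≤ n)
    (hint : Integrable (fun ω => |Y ω| ^ n) μ) : Integrable (fun ω => Y ω ^ k) μ := by
  have := integrable_norm_pow_of_le hY hkn (by simpa only [Real.norm_eq_abs] using hint)
  exact (integrable_norm_iff (f := fun ω => Y ω ^ k) (hY.pow k)).mp
    (by simpa only [norm_pow] using this)

/-- Lyapunov's inequality `‖Y‖_k ≤ ‖Y‖_n`, raised to the power `k * n`. -/
lemma integral_abs_pow_pow_le [IsProbabilityMeasure μ] (hY : AEStronglyMeasurable Y μ)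
    (hkn : k ≤ n) (hint : Integrable (fun ω => |Y ω| ^ n) μ) :
    (∫ ω, |Y ω| ^ k ∂μ) ^ n ≤ (∫ ω, |Y ω| ^ n ∂μ) ^ k := by
  rcases n.eq_zero_or_pos with rfl | hn
  · simp [Nat.le_zero.mp hkn]
  set p : ℝ := k / n
  have hp : 0 ≤ p := by positivity
  have hpow : ∀ ω, (|Y ω| ^ n) ^ p = |Y ω| ^ k := fun ω => by
    rw [← Real.rpow_natCast _ n, ← Real.rpow_mul (abs_nonneg _), mul_div_cancel₀ _ (by positivity),
      Real.rpow_natCast]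
  have jensen : ∫ ω, |Y ω| ^ k ∂μ ≤ (∫ ω, |Y ω| ^ n ∂μ) ^ p := by
    have hconcave :=
      Real.concaveOn_rpow hp (div_le_one_of_le₀ (by exact_mod_cast hkn) (by positivity))
    have := hconcave.le_map_integral (Real.continuous_rpow_const hp).continuousOn isClosed_Ici
      (Filter.Eventually.of_forall fun ω => Set.mem_Ici.mpr (by positivity)) hint
      (by simpa only [Function.comp_def, hpow, abs_pow] using
        (integrable_pow_of_le hY hkn hint).abs)
    simpa only [hpow] using this
  calc (∫ ω, |Y ω| ^ k ∂μ) ^ n ≤ ((∫ ω, |Y ω| ^ n ∂μ) ^ p) ^ n :=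
        pow_le_pow_left₀ (integral_nonneg fun ω => by positivity) jensen n
    _ = (∫ ω, |Y ω| ^ n ∂μ) ^ k := by
        rw [← Real.rpow_natCast _ n, ← Real.rpow_mul (integral_nonneg fun ω => by positivity),
          div_mul_cancel₀ _ (by positivity), Real.rpow_natCast]

end

namespace ProbabilityTheory
variable {ι : Type*} [Fintype ι]

lemma iIndepFun.integrable_fun_prod_comp {E : Type*} [MeasurableSpace E]
    {X : ι → Ω → E} {f : ι → E → ℝ} (hX : iIndepFun X μ) (mX : ∀ i, AEMeasurable (X i) μ)
    (hf : ∀ i, Integrable (f i) (μ.map (X i))) :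
    Integrable (fun ω => ∏ i, f i (X i ω)) μ := by
  have := hX.isProbabilityMeasure
  have : Integrable (fun x : ι → E => ∏ i, f i (x i)) (μ.map fun ω i => X i ω) := by
    rw [hX.map_fun_eq_pi_map mX]
    exact .fintype_prod hf
  exact this.comp_aemeasurable (aemeasurable_pi_lambda _ mX)

variable {X : ι → Ω → ℝ} {k : ι → ℕ} {n : ℕ}

lemma iIndepFun.integrable_prod_pow (hindep : iIndepFun X μ)
    (hX : ∀ i, AEStronglyMeasurable (X i) μ) (hint : ∀ i, Integrable (fun ω => |X i ω| ^ n) μ)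
    (hk : ∀ i, k i ≤ n) : Integrable (fun ω => ∏ i, X i ω ^ k i) μ :=
  have := hindep.isProbabilityMeasure
  hindep.integrable_fun_prod_comp (fun i => (hX i).aemeasurable) fun i =>
    (integrable_map_measure (continuous_pow (k i)).aestronglyMeasurable (hX i).aemeasurable).mpr
      (integrable_pow_of_le (hX i) (hk i) (hint i))

lemma iIndepFun.integral_prod_pow (hindep : iIndepFun X μ)
    (hX : ∀ i, AEStronglyMeasurable (X i) μ) :
    ∫ ω, ∏ i, X i ω ^ k i ∂μ = ∏ i, ∫ ω, X i ω ^ k i ∂μ :=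
  hindep.integral_fun_prod_comp (fun i => (hX i).aemeasurable) fun i =>
    (continuous_pow (k i)).aestronglyMeasurable

lemma iIndepFun.integral_prod_pow_eq_zero (hindep : iIndepFun X μ)
    (hX : ∀ i, AEStronglyMeasurable (X i) μ) {i : ι} (hki : k i = 1) (hmean : ∫ ω, X i ω ∂μ = 0) :
    ∫ ω, ∏ i, X i ω ^ k i ∂μ = 0 := by
  rw [hindep.integral_prod_pow hX]
  exact Finset.prod_eq_zero (Finset.mem_univ i) (by simpa [hki] using hmean)

lemma iIndepFun.abs_integral_prod_pow_le (hindep : iIndepFun X μ)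
    (hX : ∀ i, AEStronglyMeasurable (X i) μ) (hint : ∀ i, Integrable (fun ω => |X i ω| ^ n) μ)
    {M : ℝ} (hM : ∀ i, ∫ ω, |X i ω| ^ n ∂μ ≤ M) (hn : n ≠ 0) (hk : ∑ i, k i = n) :
    |∫ ω, ∏ i, X i ω ^ k i ∂μ| ≤ M := by
  have := hindep.isProbabilityMeasure
  obtain ⟨i₀, -, -⟩ := Finset.exists_ne_zero_of_sum_ne_zero (hk.trans_ne hn)
  have hM0 : 0 ≤ M := (integral_nonneg fun ω => by positivity).trans (hM i₀)
  have hfactor : ∀ i, |∫ ω, X i ω ^ k i ∂μ| ^ n ≤ M ^ k i := fun i =>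
    calc |∫ ω, X i ω ^ k i ∂μ| ^ n ≤ (∫ ω, |X i ω| ^ k i ∂μ) ^ n := by
          gcongr
          exact abs_integral_le_integral_abs.trans_eq (by simp only [abs_pow])
      _ ≤ (∫ ω, |X i ω| ^ n ∂μ) ^ k i := integral_abs_pow_pow_le (hX i) (le_of_sum_eq hk i) (hint i)
      _ ≤ M ^ k i := by gcongr; exact hM i
  refine le_of_pow_le_pow_left₀ hn hM0 ?_
  calc |∫ ω, ∏ i, X i ω ^ k i ∂μ| ^ n = ∏ i, |∫ ω, X i ω ^ k i ∂μ| ^ n := by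
        rw [hindep.integral_prod_pow hX, Finset.abs_prod, Finset.prod_pow]
    _ ≤ ∏ i, M ^ k i := Finset.prod_le_prod (fun i _ => by positivity) fun i _ => hfactor i
    _ = M ^ n := by rw [Finset.prod_pow_eq_pow_sum, hk]

variable {E : Type*} [MeasurableSpace E] {U V : Ω → E}

lemma IndepFun.integral_comp_mul_comp_of_identDistrib (hUV : IndepFun U V μ)
    (hid : IdentDistrib V U μ μ) {ψ : E → ℝ} (hψ : Measurable ψ) :
    ∫ ω, ψ (U ω) * ψ (V ω) ∂μ = (∫ ω, ψ (U ω) ∂μ) ^ 2 := by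
  have hsame : ∫ ω, ψ (V ω) ∂μ = ∫ ω, ψ (U ω) ∂μ := (hid.comp hψ).integral_eq
  calc ∫ ω, ψ (U ω) * ψ (V ω) ∂μ = (∫ ω, ψ (U ω) ∂μ) * ∫ ω, ψ (V ω) ∂μ :=
        (hUV.comp hψ hψ).integral_fun_mul_eq_mul_integral
          (hψ.comp_aemeasurable hid.aemeasurable_snd).aestronglyMeasurable
          (hψ.comp_aemeasurable hid.aemeasurable_fst).aestronglyMeasurable
    _ = (∫ ω, ψ (U ω) ∂μ) ^ 2 := by rw [hsame, sq]

lemma IndepFun.integrable_comp_mul_comp_of_identDistrib (hUV : IndepFun U V μ)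
    (hid : IdentDistrib V U μ μ) {ψ : E → ℝ} (hψ : Measurable ψ)
    (hint : Integrable (fun ω => ψ (U ω)) μ) :
    Integrable (fun ω => ψ (U ω) * ψ (V ω)) μ :=
  (hUV.comp hψ hψ).integrable_mul hint ((hid.comp hψ).integrable_iff.mpr hint)

lemma IndepFun.integral_sum_mul_sq_of_identDistrib {α : Type*} (hUV : IndepFun U V μ)
    (hid : IdentDistrib V U μ μ) {s : Finset α} {φ : α → E → ℝ} (hφ : ∀ a, Measurable (φ a))
    (hint : ∀ a ∈ s, ∀ b ∈ s, Integrable (fun ω => φ a (U ω) * φ b (U ω)) μ) :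
    ∫ ω, (∑ a ∈ s, φ a (U ω) * φ a (V ω)) ^ 2 ∂μ
      = ∑ a ∈ s, ∑ b ∈ s, (∫ ω, φ a (U ω) * φ b (U ω) ∂μ) ^ 2 := by
  have hψ : ∀ a b, Measurable fun x => φ a x * φ b x := fun a b => (hφ a).mul (hφ b)
  have hexpand : ∀ ω, (∑ a ∈ s, φ a (U ω) * φ a (V ω)) ^ 2
      = ∑ a ∈ s, ∑ b ∈ s, (φ a (U ω) * φ b (U ω)) * (φ a (V ω) * φ b (V ω)) := fun ω => by
    rw [sq, Finset.sum_mul_sum]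
    exact Finset.sum_congr rfl fun a _ => Finset.sum_congr rfl fun b _ => by ring
  simp_rw [hexpand]
  have hint' : ∀ a ∈ s, ∀ b ∈ s, Integrable
      (fun ω => (φ a (U ω) * φ b (U ω)) * (φ a (V ω) * φ b (V ω))) μ := fun a ha b hb =>
    hUV.integrable_comp_mul_comp_of_identDistrib hid (hψ a b) (hint a ha b hb)
  rw [integral_finsetSum _ fun a ha => integrable_finsetSum _ fun b hb => hint' a ha b hb]
  refine Finset.sum_congr rfl fun a ha => ?_
  rw [integral_finsetSum _ fun b hb => hint' a ha b hb]
  exact Finset.sum_congr rfl fun b _ =>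
    hUV.integral_comp_mul_comp_of_identDistrib hid (hψ a b)

lemma iIndepFun.sum_sq_integral_prod_pow_le {d m : ℕ} {X : Fin d → Ω → ℝ}
    (hindep : iIndepFun X μ) (hX : ∀ j, AEStronglyMeasurable (X j) μ)
    (hmean : ∀ j, ∫ ω, X j ω ∂μ = 0) (hint : ∀ j, Integrable (fun ω => |X j ω| ^ (2 * m)) μ)
    {M : ℝ} (hM : ∀ j, ∫ ω, |X j ω| ^ (2 * m) ∂μ ≤ M) (hm : m ≠ 0) :
    ∑ α ∈ Finset.Nat.antidiagonalTuple d m, ∑ β ∈ Finset.Nat.antidiagonalTuple d m,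
      (∫ ω, ∏ j, X j ω ^ (α j + β j) ∂μ) ^ 2 ≤ (Bdm d m).card * M ^ 2 := by
  set T := Finset.Nat.antidiagonalTuple d m
  rw [← Finset.sum_product' T T fun α β => (∫ ω, ∏ j, X j ω ^ (α j + β j) ∂μ) ^ 2,
    ← Finset.sum_filter_of_ne (p := fun p => ∀ i, p.1 i + p.2 i ≠ 1)]
  · refine (Finset.sum_le_card_nsmul _ _ _ fun p hp => ?_).trans_eq (nsmul_eq_mul _ _)
    obtain ⟨α, β⟩ := p
    obtain ⟨hα, hβ⟩ := Finset.mem_product.mp (Finset.mem_filter.mp hp).1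
    have hbound := hindep.abs_integral_prod_pow_le hX hint hM (by omega)
      (Finset.Nat.sum_add_eq_of_mem_antidiagonalTuple hα hβ)
    exact sq_le_sq' (abs_le.mp hbound).1 (abs_le.mp hbound).2
  · rintro ⟨α, β⟩ - hne i hi
    apply hne
    rw [hindep.integral_prod_pow_eq_zero (k := fun j => α j + β j) hX hi (hmean i), sq,
      zero_mul]

end ProbabilityTheory

end

theorem inner_moment_le_general {Ω : Type*} [MeasurableSpace Ω]
    (μ : Measure Ω)
    (d m : ℕ) (hd : 0 < d) (hm : 0 < m)
    (X X' : Fin d → Ω → ℝ)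
    (hmeas : ∀ j, Measurable (X j)) (hmeas' : ∀ j, Measurable (X' j))
    (hindep : iIndepFun X μ)
    (hmean : ∀ j, ∫ ω, X j ω ∂μ = 0)
    (hint : ∀ j, Integrable (fun ω => (X j ω) ^ (2 * m)) μ)
    (hcopy_indep : IndepFun (fun ω (j : Fin d) => X j ω) (fun ω (j : Fin d) => X' j ω) μ)
    (hcopy_id : Measure.map (fun ω (j : Fin d) => X' j ω) μ
      = Measure.map (fun ω (j : Fin d) => X j ω) μ) :
    ∫ ω, (∑ α ∈ Finset.Nat.antidiagonalTuple d m,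
        (∏ j, (X j ω) ^ (α j)) * (∏ j, (X' j ω) ^ (α j))) ^ 2 ∂μ
      ≤ ((Bdm d m).card : ℝ) *
          (Finset.univ.sup' (Finset.univ_nonempty_iff.mpr (Fin.pos_iff_nonempty.mp hd))
            (fun j => ∫ ω, (X j ω) ^ (2 * m) ∂μ)) ^ 2 := by
  have hXm : ∀ j, AEStronglyMeasurable (X j) μ := fun j => (hmeas j).aestronglyMeasurable
  have habs : ∀ j, Integrable (fun ω => |X j ω| ^ (2 * m)) μ := fun j => by
    simpa only [(even_two_mul m).pow_abs] using hint j
  have hM : ∀ j, ∫ ω, |X j ω| ^ (2 * m) ∂μ ≤ _ := fun j => by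
    simpa only [(even_two_mul m).pow_abs] using
      Finset.le_sup' (fun j => ∫ ω, (X j ω) ^ (2 * m) ∂μ) (Finset.mem_univ j)
  have hprod : ∀ (α β : Fin d → ℕ) (ω : Ω),
      (∏ j, X j ω ^ α j) * (∏ j, X j ω ^ β j) = ∏ j, X j ω ^ (α j + β j) := fun α β ω => by
    simp only [pow_add, Finset.prod_mul_distrib]
  have hid : IdentDistrib (fun ω j => X' j ω) (fun ω j => X j ω) μ μ :=
    ⟨(measurable_pi_lambda _ hmeas').aemeasurable, (measurable_pi_lambda _ hmeas).aemeasurable,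
      hcopy_id⟩
  have hexpand := hcopy_indep.integral_sum_mul_sq_of_identDistrib hid
    (s := Finset.Nat.antidiagonalTuple d m)
    (φ := fun α v => ∏ j, v j ^ α j) (fun α => by fun_prop) fun α hα β hβ => by
      simp only [hprod]
      exact hindep.integrable_prod_pow hXm habs
        (le_of_sum_eq (Finset.Nat.sum_add_eq_of_mem_antidiagonalTuple hα hβ))
  simp only [hprod] at hexpand
  rw [hexpand]
  exact hindep.sum_sq_integral_prod_pow_le hXm hmean habs hM hm.ne'

theorem inner_moment_le {Ω : Type*} [MeasurableSpace Ω]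
    (μ : Measure Ω) [IsProbabilityMeasure μ]
    (d m : ℕ) (hd : 0 < d) (hm : 0 < m)
    (X X' : Fin d → Ω → ℝ)
    (hmeas : ∀ j, Measurable (X j)) (hmeas' : ∀ j, Measurable (X' j))
    (hindep : iIndepFun X μ)
    (hmean : ∀ j, ∫ ω, X j ω ∂μ = 0)
    (hint : ∀ j, Integrable (fun ω => (X j ω) ^ (2 * m)) μ)
    (hcopy_indep : IndepFun (fun ω (j : Fin d) => X j ω) (fun ω (j : Fin d) => X' j ω) μ)
    (hcopy_id : Measure.map (fun ω (j : Fin d) => X' j ω) μ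
      = Measure.map (fun ω (j : Fin d) => X j ω) μ) :
    ∫ ω, (∑ α ∈ Finset.Nat.antidiagonalTuple d m,
        (∏ j, (X j ω) ^ (α j)) * (∏ j, (X' j ω) ^ (α j))) ^ 2 ∂μ
      ≤ ((Bdm d m).card : ℝ) *
          (Finset.univ.sup' (Finset.univ_nonempty_iff.mpr (Fin.pos_iff_nonempty.mp hd))
            (fun j => ∫ ω, (X j ω) ^ (2 * m) ∂μ)) ^ 2 :=
  inner_moment_le_general μ d m hd hm X X' hmeas hmeas' hindep hmean hint hcopy_indep hcopy_id
end

section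
/- In the neural setup with n ≥ 1, assume E[X_j²] < ∞ for every j ∈ {1, …, d}, and let X*' be an independent copy of the random vector X* (for instance, built from independent copies Θ'^{(1)}, …, Θ'^{(n)} and X' of the matrices and of X, all independent of the original ones). Then E[⟨X*, X*'⟩²] ≤ d · ( max_{1≤j≤d} E[X_j²] )², where ⟨·,·⟩ is the Euclidean inner product on ℝ^d. -/
/-!
If a random matrix `T` has pairwise independent centred entries of variance `v` and is independent
of a random vector `Y`, then `E[(TY)(TY)ᵀ] = v · tr E[YYᵀ] · I`: the cross terms vanish because the
entries are centred. With `v = 1/d` every layer therefore preserves `E|Y|²`, and the outermost layer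
makes the second-moment matrix of `X*` equal to `c · I` with `c = (1/d) ∑ⱼ E[Xⱼ²] ≤ maxⱼ E[Xⱼ²]`.
For an independent copy `X*'`, `E⟨X*, X*'⟩² = ∑ⱼₖ E[X*ⱼ X*ₖ]² = d c²`.
-/

open MeasureTheory ProbabilityTheory
open scoped NNReal

noncomputable section

variable {Ω : Type*} [MeasurableSpace Ω]

/-- `X* = Θ^{(1)} ⋯ Θ^{(n)} X` as a random vector in `ℝ^d`. -/
def neuralVec (d n : ℕ) (Θ : Fin n → Ω → Matrix (Fin d) (Fin d) ℝ)
    (X : Fin d → Ω → ℝ) (ω : Ω) : Fin d → ℝ :=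
  ((List.ofFn fun i => Θ i ω).prod).mulVec fun j => X j ω

open Matrix

namespace ProbabilityTheory

variable {μ : Measure Ω}

lemma IndepFun.indepFun_prodMk_of_prodMk {β γ δ : Type*} [MeasurableSpace β]
    [MeasurableSpace γ] [MeasurableSpace δ] [IsProbabilityMeasure μ]
    {f : Ω → β} {g : Ω → γ} {h : Ω → δ}
    (hf : Measurable f) (hg : Measurable g) (hh : Measurable h)
    (hfg : IndepFun f g μ) (hfgh : IndepFun (fun ω => (f ω, g ω)) h μ) :
    IndepFun f (fun ω => (g ω, h ω)) μ := by
  have hgh : IndepFun g h μ := hfgh.comp measurable_snd measurable_id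
  rw [indepFun_iff_map_prod_eq_prod_map_map hf.aemeasurable (hg.prodMk hh).aemeasurable]
  have hassoc : (fun ω => (f ω, (g ω, h ω)))
      = MeasurableEquiv.prodAssoc ∘ fun ω => ((f ω, g ω), h ω) := rfl
  rw [hassoc, ← Measure.map_map MeasurableEquiv.prodAssoc.measurable
      ((hf.prodMk hg).prodMk hh),
    (indepFun_iff_map_prod_eq_prod_map_map (hf.prodMk hg).aemeasurable hh.aemeasurable).mp hfgh,
    (indepFun_iff_map_prod_eq_prod_map_map hf.aemeasurable hg.aemeasurable).mp hfg,
    Measure.prodAssoc_prod,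
    ← (indepFun_iff_map_prod_eq_prod_map_map hg.aemeasurable hh.aemeasurable).mp hgh]

lemma iIndepFun.indepFun_comp_of_disjoint {ι κ₁ κ₂ β : Type*} [Fintype κ₁] [Fintype κ₂]
    [MeasurableSpace β] {f : ι → Ω → β} (h : iIndepFun f μ) (hf : ∀ i, Measurable (f i))
    {g₁ : κ₁ → ι} {g₂ : κ₂ → ι} (hg : ∀ a b, g₁ a ≠ g₂ b) :
    IndepFun (fun ω a => f (g₁ a) ω) (fun ω b => f (g₂ b) ω) μ := by
  classical
  have hST : Disjoint (Finset.univ.image g₁) (Finset.univ.image g₂) := by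
    simpa [Finset.disjoint_left] using fun a b => (hg a b).symm
  refine (h.indepFun_finset _ _ hST hf).comp
    (φ := fun v a => v ⟨g₁ a, Finset.mem_image_of_mem _ (Finset.mem_univ a)⟩)
    (ψ := fun v b => v ⟨g₂ b, Finset.mem_image_of_mem _ (Finset.mem_univ b)⟩) ?_ ?_
  · exact measurable_pi_lambda _ fun a => measurable_pi_apply _
  · exact measurable_pi_lambda _ fun b => measurable_pi_apply _

lemma IndepFun.memLp_two_mul {f g : Ω → ℝ} (hfg : IndepFun f g μ)
    (hf : MemLp f 2 μ) (hg : MemLp g 2 μ) : MemLp (fun ω => f ω * g ω) 2 μ := by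
  refine (memLp_two_iff_integrable_sq (hf.aestronglyMeasurable.mul hg.aestronglyMeasurable)).mpr ?_
  have hsq := (hfg.comp (measurable_id.pow_const 2) (measurable_id.pow_const 2)).integrable_mul
    hf.integrable_sq hg.integrable_sq
  exact hsq.congr (ae_of_all _ fun ω => (mul_pow (f ω) (g ω) 2).symm)

lemma integral_sum_mul_sum {ι κ : Type*} (s : Finset ι) (t : Finset κ) (f : ι → Ω → ℝ)
    (g : κ → Ω → ℝ) (hfg : ∀ a b, Integrable (fun ω => f a ω * g b ω) μ) :
    ∫ ω, (∑ a ∈ s, f a ω) * (∑ b ∈ t, g b ω) ∂μ = ∑ a ∈ s, ∑ b ∈ t, ∫ ω, f a ω * g b ω ∂μ := by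
  simp_rw [Finset.sum_mul_sum]
  rw [integral_finsetSum _ fun a _ => integrable_finsetSum _ fun b _ => hfg a b]
  exact Finset.sum_congr rfl fun a _ => integral_finsetSum _ fun b _ => hfg a b

end ProbabilityTheory

section SecondMoment

variable {ι κ : Type*}

def secondMoment (μ : Measure Ω) (V : Ω → ι → ℝ) : Matrix ι ι ℝ :=
  Matrix.of fun j k => ∫ ω, V ω j * V ω k ∂μ

lemma trace_secondMoment [Fintype ι] (μ : Measure Ω) (V : Ω → ι → ℝ) :
    (secondMoment μ V).trace = ∑ j, ∫ ω, V ω j ^ 2 ∂μ := by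
  simp [secondMoment, Matrix.trace, sq]

variable {μ : Measure Ω} {T : Ω → Matrix ι κ ℝ} {Y : Ω → κ → ℝ} {v : ℝ}

lemma integral_entry_mul_entry [DecidableEq ι] [DecidableEq κ]
    (hpair : Pairwise fun p q : ι × κ =>
      IndepFun (fun ω => T ω p.1 p.2) (fun ω => T ω q.1 q.2) μ)
    (hT : ∀ i k, MemLp (fun ω => T ω i k) 2 μ) (hmean : ∀ i k, ∫ ω, T ω i k ∂μ = 0)
    (hvar : ∀ i k, ∫ ω, T ω i k ^ 2 ∂μ = v) (p q : ι × κ) :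
    ∫ ω, T ω p.1 p.2 * T ω q.1 q.2 ∂μ = if p = q then v else 0 := by
  split_ifs with hpq
  · simp_rw [hpq, ← sq, hvar]
  · rw [(hpair hpq).integral_fun_mul_eq_mul_integral (hT _ _).aestronglyMeasurable
      (hT _ _).aestronglyMeasurable, hmean, zero_mul]

lemma memLp_entry_mul (hTY : IndepFun (fun ω (p : ι × κ) => T ω p.1 p.2) Y μ)
    (hT : ∀ i k, MemLp (fun ω => T ω i k) 2 μ) (hY : ∀ k, MemLp (fun ω => Y ω k) 2 μ)
    (i : ι) (k : κ) : MemLp (fun ω => T ω i k * Y ω k) 2 μ :=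
  (hTY.comp (measurable_pi_apply (i, k)) (measurable_pi_apply k)).memLp_two_mul (hT i k) (hY k)

variable [Fintype κ]

lemma memLp_mulVec (hTY : IndepFun (fun ω (p : ι × κ) => T ω p.1 p.2) Y μ)
    (hT : ∀ i k, MemLp (fun ω => T ω i k) 2 μ) (hY : ∀ k, MemLp (fun ω => Y ω k) 2 μ) (i : ι) :
    MemLp (fun ω => (T ω *ᵥ Y ω) i) 2 μ := by
  simpa [Matrix.mulVec, dotProduct] using
    memLp_finsetSum _ fun k _ => memLp_entry_mul hTY hT hY i k

lemma secondMoment_mulVec [Fintype ι] [DecidableEq ι]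
    (hpair : Pairwise fun p q : ι × κ =>
      IndepFun (fun ω => T ω p.1 p.2) (fun ω => T ω q.1 q.2) μ)
    (hTY : IndepFun (fun ω (p : ι × κ) => T ω p.1 p.2) Y μ)
    (hT : ∀ i k, MemLp (fun ω => T ω i k) 2 μ) (hmean : ∀ i k, ∫ ω, T ω i k ∂μ = 0)
    (hvar : ∀ i k, ∫ ω, T ω i k ^ 2 ∂μ = v) (hY : ∀ k, MemLp (fun ω => Y ω k) 2 μ) :
    secondMoment μ (fun ω => T ω *ᵥ Y ω) = (v * (secondMoment μ Y).trace) • 1 := by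
  classical
  ext i j
  have hterm := memLp_entry_mul hTY hT hY
  have hfactor : ∀ a b, ∫ ω, T ω i a * Y ω a * (T ω j b * Y ω b) ∂μ
      = (if (i, a) = (j, b) then v else 0) * secondMoment μ Y a b := by
    intro a b
    have hind := hTY.comp (φ := fun t => t (i, a) * t (j, b)) (ψ := fun y => y a * y b)
      (by fun_prop) (by fun_prop)
    rw [← integral_entry_mul_entry hpair hT hmean hvar (i, a) (j, b)]
    calc _ = ∫ ω, T ω i a * T ω j b * (Y ω a * Y ω b) ∂μ := by congr 1; ext ω; ring
      _ = _ := hind.integral_fun_mul_eq_mul_integral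
        ((hT i a).aestronglyMeasurable.mul (hT j b).aestronglyMeasurable)
        ((hY a).aestronglyMeasurable.mul (hY b).aestronglyMeasurable)
  calc secondMoment μ (fun ω => T ω *ᵥ Y ω) i j
      = ∑ a, ∑ b, ∫ ω, T ω i a * Y ω a * (T ω j b * Y ω b) ∂μ :=
        integral_sum_mul_sum _ _ _ _ fun a b => (hterm i a).integrable_mul (hterm j b)
    _ = ∑ a, ∑ b, (if (i, a) = (j, b) then v else 0) * secondMoment μ Y a b := by
        simp_rw [hfactor]
    _ = ((v * (secondMoment μ Y).trace) • (1 : Matrix ι ι ℝ)) i j := by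
        by_cases hij : i = j
        · simp [hij, Matrix.trace, Finset.mul_sum]
        · simp [hij]

end SecondMoment

section InnerProduct

variable {ι : Type*} {μ : Measure Ω} {V : Ω → ι → ℝ}

lemma ProbabilityTheory.IdentDistrib.secondMoment_eq {Ω' : Type*} [MeasurableSpace Ω']
    {ν : Measure Ω'} {W : Ω' → ι → ℝ} (h : IdentDistrib V W μ ν) :
    secondMoment μ V = secondMoment ν W := by
  ext j k
  exact (h.comp (u := fun y => y j * y k) (by fun_prop)).integral_eq

lemma integral_inner_sq_of_indepFun [Fintype ι] {W : Ω → ι → ℝ} (hVW : IndepFun V W μ)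
    (hV : ∀ j, MemLp (fun ω => V ω j) 2 μ) (hW : ∀ j, MemLp (fun ω => W ω j) 2 μ) :
    ∫ ω, (∑ j, V ω j * W ω j) ^ 2 ∂μ
      = ∑ j, ∑ k, secondMoment μ V j k * secondMoment μ W j k := by
  have hterm : ∀ j, MemLp (fun ω => V ω j * W ω j) 2 μ := fun j =>
    (hVW.comp (measurable_pi_apply j) (measurable_pi_apply j)).memLp_two_mul (hV j) (hW j)
  rw [funext fun ω => sq (∑ j, V ω j * W ω j),
    integral_sum_mul_sum _ _ _ _ fun j k => (hterm j).integrable_mul (hterm k)]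
  refine Finset.sum_congr rfl fun j _ => Finset.sum_congr rfl fun k _ => ?_
  have hind := hVW.comp (φ := fun y => y j * y k) (ψ := fun y => y j * y k)
    (by fun_prop) (by fun_prop)
  calc _ = ∫ ω, V ω j * V ω k * (W ω j * W ω k) ∂μ := by congr 1; ext ω; ring
    _ = _ := hind.integral_fun_mul_eq_mul_integral
        ((hV j).aestronglyMeasurable.mul (hV k).aestronglyMeasurable)
        ((hW j).aestronglyMeasurable.mul (hW k).aestronglyMeasurable)

end InnerProduct

section Neural

variable {d : ℕ}

lemma neuralVec_zero {α : Type*} (Θ : Fin 0 → α → Matrix (Fin d) (Fin d) ℝ)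
    (X : Fin d → α → ℝ) (ω : α) : neuralVec d 0 Θ X ω = fun j => X j ω := by
  simp [neuralVec]

lemma neuralVec_succ {α : Type*} {n : ℕ} (Θ : Fin (n + 1) → α → Matrix (Fin d) (Fin d) ℝ)
    (X : Fin d → α → ℝ) (ω : α) :
    neuralVec d (n + 1) Θ X ω = Θ 0 ω *ᵥ neuralVec d n (fun i => Θ i.succ) X ω := by
  simp [neuralVec, List.ofFn_succ, Matrix.mulVec_mulVec]

lemma measurable_neuralVec : ∀ {n : ℕ} {Θ : Fin n → Ω → Matrix (Fin d) (Fin d) ℝ}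
    {X : Fin d → Ω → ℝ}, (∀ i a b, Measurable fun ω => Θ i ω a b) → (∀ j, Measurable (X j)) →
    Measurable (neuralVec d n Θ X)
  | 0, Θ, X, _, hX => by
    simpa only [funext (neuralVec_zero Θ X)] using measurable_pi_lambda _ hX
  | n + 1, Θ, X, hΘ, hX => by
    have ih := measurable_neuralVec (Θ := fun i => Θ i.succ) (fun i => hΘ i.succ) hX
    simp_rw [funext (neuralVec_succ Θ X)]
    refine measurable_pi_lambda _ fun j => ?_
    simp only [Matrix.mulVec, dotProduct]
    exact Finset.measurable_fun_sum _ fun a _ => (hΘ 0 j a).mul ((measurable_pi_apply a).comp ih)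

end Neural

/-- The neural setup, with the Gaussian law of the weights weakened to "centred, variance `v`". -/
structure NeuralSetup (μ : Measure Ω) (v : ℝ) {d n : ℕ}
    (Θ : Fin n → Ω → Matrix (Fin d) (Fin d) ℝ) (X : Fin d → Ω → ℝ) : Prop where
  measurable_entry : ∀ i a b, Measurable fun ω => Θ i ω a b
  measurable_input : ∀ j, Measurable (X j)
  iIndepFun_entry : iIndepFun (fun p : Fin n × Fin d × Fin d => fun ω => Θ p.1 ω p.2.1 p.2.2) μ
  indepFun_entry_input : IndepFun (fun ω (p : Fin n × Fin d × Fin d) => Θ p.1 ω p.2.1 p.2.2)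
    (fun ω j => X j ω) μ
  memLp_entry : ∀ i a b, MemLp (fun ω => Θ i ω a b) 2 μ
  integral_entry : ∀ i a b, ∫ ω, Θ i ω a b ∂μ = 0
  integral_entry_sq : ∀ i a b, ∫ ω, Θ i ω a b ^ 2 ∂μ = v
  memLp_input : ∀ j, MemLp (X j) 2 μ

namespace NeuralSetup

variable {μ : Measure Ω} {v : ℝ} {d : ℕ} {X : Fin d → Ω → ℝ}

lemma tail {n : ℕ} {Θ : Fin (n + 1) → Ω → Matrix (Fin d) (Fin d) ℝ} (h : NeuralSetup μ v Θ X) :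
    NeuralSetup μ v (fun i => Θ i.succ) X where
  measurable_entry i := h.measurable_entry i.succ
  measurable_input := h.measurable_input
  iIndepFun_entry := h.iIndepFun_entry.precomp
    (g := fun p : Fin n × Fin d × Fin d => (p.1.succ, p.2))
    fun p q hpq => by simpa [Prod.ext_iff] using hpq
  indepFun_entry_input := h.indepFun_entry_input.comp
    (φ := fun (e : Fin (n + 1) × Fin d × Fin d → ℝ) (p : Fin n × Fin d × Fin d) =>
      e (p.1.succ, p.2)) (by fun_prop) measurable_id
  memLp_entry i := h.memLp_entry i.succ
  integral_entry i := h.integral_entry i.succ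
  integral_entry_sq i := h.integral_entry_sq i.succ
  memLp_input := h.memLp_input

lemma pairwise_indepFun_entry {n : ℕ} {Θ : Fin n → Ω → Matrix (Fin d) (Fin d) ℝ}
    (h : NeuralSetup μ v Θ X) (i : Fin n) :
    Pairwise fun p q : Fin d × Fin d =>
      IndepFun (fun ω => Θ i ω p.1 p.2) (fun ω => Θ i ω q.1 q.2) μ :=
  fun p q hpq => h.iIndepFun_entry.indepFun (i := (i, p)) (j := (i, q))
    fun hc => hpq (congrArg Prod.snd hc)

lemma indepFun_head [IsProbabilityMeasure μ] {n : ℕ}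
    {Θ : Fin (n + 1) → Ω → Matrix (Fin d) (Fin d) ℝ} (h : NeuralSetup μ v Θ X) :
    IndepFun (fun ω (p : Fin d × Fin d) => Θ 0 ω p.1 p.2)
      (neuralVec d n (fun i => Θ i.succ) X) μ := by
  have hhead_tail := h.iIndepFun_entry.indepFun_comp_of_disjoint
    (fun p => h.measurable_entry p.1 p.2.1 p.2.2)
    (g₁ := fun q : Fin d × Fin d => ((0 : Fin (n + 1)), q))
    (g₂ := fun p : Fin n × Fin d × Fin d => (p.1.succ, p.2))
    fun q p => by simp [Prod.ext_iff, (Fin.succ_ne_zero p.1).symm]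
  have hinput := h.indepFun_entry_input.comp
    (φ := fun (e : Fin (n + 1) × Fin d × Fin d → ℝ) =>
      (fun q : Fin d × Fin d => e (0, q), fun p : Fin n × Fin d × Fin d => e (p.1.succ, p.2)))
    (by fun_prop) measurable_id
  have hjoint := hhead_tail.indepFun_prodMk_of_prodMk
    (measurable_pi_lambda _ fun q => h.measurable_entry _ _ _)
    (measurable_pi_lambda _ fun p => h.measurable_entry _ _ _)
    (measurable_pi_lambda _ h.measurable_input) hinput
  -- the tail network, read as a function of the tail entries and the input
  have htail : Measurable fun z : (Fin n × Fin d × Fin d → ℝ) × (Fin d → ℝ) =>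
      neuralVec d n (fun i z => Matrix.of fun a b => z.1 (i, a, b)) (fun j z => z.2 j) z :=
    measurable_neuralVec (fun i a b => by fun_prop) fun j => by fun_prop
  exact hjoint.comp measurable_id htail

lemma memLp_neuralVec [IsProbabilityMeasure μ] : ∀ {n : ℕ}
    {Θ : Fin n → Ω → Matrix (Fin d) (Fin d) ℝ}, NeuralSetup μ v Θ X →
    ∀ j, MemLp (fun ω => neuralVec d n Θ X ω j) 2 μ
  | 0, Θ, h => by simpa only [neuralVec_zero] using h.memLp_input
  | n + 1, Θ, h => by
    simp_rw [neuralVec_succ]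
    exact memLp_mulVec h.indepFun_head (h.memLp_entry 0) (memLp_neuralVec h.tail)

lemma secondMoment_neuralVec_succ [IsProbabilityMeasure μ] {n : ℕ}
    {Θ : Fin (n + 1) → Ω → Matrix (Fin d) (Fin d) ℝ} (h : NeuralSetup μ v Θ X) :
    secondMoment μ (neuralVec d (n + 1) Θ X)
      = (v * (secondMoment μ (neuralVec d n (fun i => Θ i.succ) X)).trace) • 1 := by
  simp_rw [funext (neuralVec_succ Θ X)]
  exact secondMoment_mulVec (h.pairwise_indepFun_entry 0) h.indepFun_head (h.memLp_entry 0)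
    (h.integral_entry 0) (h.integral_entry_sq 0) (memLp_neuralVec h.tail)

lemma trace_secondMoment_neuralVec [IsProbabilityMeasure μ] (hv : v * d = 1) : ∀ {n : ℕ}
    {Θ : Fin n → Ω → Matrix (Fin d) (Fin d) ℝ}, NeuralSetup μ v Θ X →
    (secondMoment μ (neuralVec d n Θ X)).trace = (secondMoment μ fun ω j => X j ω).trace
  | 0, Θ, _ => by rw [funext (neuralVec_zero Θ X)]
  | n + 1, Θ, h => by
    rw [h.secondMoment_neuralVec_succ, Matrix.trace_smul, Matrix.trace_one, Fintype.card_fin,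
      trace_secondMoment_neuralVec hv h.tail, smul_eq_mul, mul_right_comm, hv, one_mul]

end NeuralSetup

lemma integral_sq_gaussianReal_zero (v : ℝ≥0) : ∫ x, x ^ 2 ∂gaussianReal 0 v = v := by
  rw [← variance_of_integral_eq_zero aemeasurable_id' integral_id_gaussianReal,
    variance_fun_id_gaussianReal]

lemma NeuralSetup.of_gaussian {μ : Measure Ω} {d n : ℕ} {v : ℝ≥0}
    {Θ : Fin n → Ω → Matrix (Fin d) (Fin d) ℝ} {X : Fin d → Ω → ℝ}
    (hΘmeas : ∀ i a b, Measurable fun ω => Θ i ω a b) (hXmeas : ∀ j, Measurable (X j))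
    (hentries : iIndepFun
      (fun p : Fin n × Fin d × Fin d => fun ω => Θ p.1 ω p.2.1 p.2.2) μ)
    (hgauss : ∀ i a b, Measure.map (fun ω => Θ i ω a b) μ = gaussianReal 0 v)
    (hindepX : IndepFun (fun ω => fun p : Fin n × Fin d × Fin d => Θ p.1 ω p.2.1 p.2.2)
      (fun ω (j : Fin d) => X j ω) μ)
    (hint : ∀ j, Integrable (fun ω => (X j ω) ^ 2) μ) :
    NeuralSetup μ v Θ X where
  measurable_entry := hΘmeas
  measurable_input := hXmeas
  iIndepFun_entry := hentries
  indepFun_entry_input := hindepX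
  memLp_entry i a b := (memLp_map_measure_iff aestronglyMeasurable_id
    (hΘmeas i a b).aemeasurable).mp (hgauss i a b ▸ memLp_id_gaussianReal 2)
  integral_entry i a b := by
    rw [← integral_map (f := fun x : ℝ => x) (hΘmeas i a b).aemeasurable
      aestronglyMeasurable_id, hgauss, integral_id_gaussianReal]
  integral_entry_sq i a b := by
    rw [← integral_map (f := fun x : ℝ => x ^ 2) (hΘmeas i a b).aemeasurable (by fun_prop),
      hgauss, integral_sq_gaussianReal_zero]
  memLp_input j := (memLp_two_iff_integrable_sq (hXmeas j).aestronglyMeasurable).mpr (hint j)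

theorem neural_inner_sq_le (μ : Measure Ω) [IsProbabilityMeasure μ]
    (d n : ℕ) (hd : 0 < d) (hn : 1 ≤ n)
    (Θ : Fin n → Ω → Matrix (Fin d) (Fin d) ℝ) (X : Fin d → Ω → ℝ)
    (hΘmeas : ∀ i a b, Measurable fun ω => Θ i ω a b)
    (hXmeas : ∀ j, Measurable (X j))
    (hentries : iIndepFun
      (fun p : Fin n × Fin d × Fin d => fun ω => Θ p.1 ω p.2.1 p.2.2) μ)
    (hgauss : ∀ i a b, Measure.map (fun ω => Θ i ω a b) μ = gaussianReal 0 (d : ℝ≥0)⁻¹)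
    (hindepX : IndepFun (fun ω => fun p : Fin n × Fin d × Fin d => Θ p.1 ω p.2.1 p.2.2)
      (fun ω (j : Fin d) => X j ω) μ)
    (hint : ∀ j, Integrable (fun ω => (X j ω) ^ 2) μ)
    (Xstar' : Ω → Fin d → ℝ)
    (hXstar'meas : Measurable Xstar')
    (hcopy_indep : IndepFun (fun ω => neuralVec d n Θ X ω) Xstar' μ)
    (hcopy_id : Measure.map Xstar' μ = Measure.map (fun ω => neuralVec d n Θ X ω) μ) :
    ∫ ω, (∑ j, neuralVec d n Θ X ω j * Xstar' ω j) ^ 2 ∂μ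
      ≤ (d : ℝ) *
          (Finset.univ.sup' (Finset.univ_nonempty_iff.mpr (Fin.pos_iff_nonempty.mp hd))
            (fun j => ∫ ω, (X j ω) ^ 2 ∂μ)) ^ 2 := by
  obtain ⟨m, rfl⟩ : ∃ m, n = m + 1 := Nat.exists_eq_add_of_le' hn
  have h : NeuralSetup μ (d : ℝ)⁻¹ Θ X := by
    simpa using NeuralSetup.of_gaussian hΘmeas hXmeas hentries hgauss hindepX hint
  set M := Finset.univ.sup' _ fun j => ∫ ω, (X j ω) ^ 2 ∂μ
  set c := (d : ℝ)⁻¹ * ∑ j, ∫ ω, (X j ω) ^ 2 ∂μ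
  have hV := h.memLp_neuralVec
  have hisotropic : secondMoment μ (neuralVec d (m + 1) Θ X) = c • 1 := by
    rw [h.secondMoment_neuralVec_succ, h.tail.trace_secondMoment_neuralVec (by simp [hd.ne']),
      trace_secondMoment]
  have hcopy : IdentDistrib Xstar' (neuralVec d (m + 1) Θ X) μ μ :=
    ⟨hXstar'meas.aemeasurable, (measurable_neuralVec hΘmeas hXmeas).aemeasurable, hcopy_id⟩
  have hW j : MemLp (fun ω => Xstar' ω j) 2 μ :=
    ((hcopy.comp (measurable_pi_apply j)).memLp_iff).mpr (hV j)
  have hc_nonneg : 0 ≤ c := by positivity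
  have hc_le : c ≤ M := by
    rw [inv_mul_le_iff₀ (by positivity)]
    simpa using Finset.sum_le_card_nsmul Finset.univ _ M fun j _ =>
      Finset.le_sup' _ (Finset.mem_univ j)
  calc ∫ ω, (∑ j, neuralVec d (m + 1) Θ X ω j * Xstar' ω j) ^ 2 ∂μ = d * c ^ 2 := by
        rw [integral_inner_sq_of_indepFun hcopy_indep hV hW, hcopy.secondMoment_eq, hisotropic]
        simp [Matrix.one_apply, sq]
    _ ≤ d * M ^ 2 := by gcongr

end
end

section
/- In the neural setup with n ≥ 1, assume that the coordinates X₁, …, X_d are mutually independent with E[X_j⁴] < ∞ for every j. For k ∈ {1,2,3,4}, let j^k = (j^k_0, …, j^k_n) be sequences with entries in {1, …, d} such that for every ℓ ∈ {0, 1, …, n}: j^1_ℓ = j^2_ℓ, j^3_ℓ = j^4_ℓ, and j^1_ℓ ≠ j^3_ℓ. Set P = (∏_{i=1}^n Θ^{(i)}_{j^1_{i−1} j^1_i}) X_{j^1_n} · (∏_{i=1}^n Θ^{(i)}_{j^2_{i−1} j^2_i}) X_{j^2_n} and Q = (∏_{i=1}^n Θ^{(i)}_{j^3_{i−1} j^3_i})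 X_{j^3_n} · (∏_{i=1}^n Θ^{(i)}_{j^4_{i−1} j^4_i}) X_{j^4_n}. Then Cov(P, Q) = 0. -/
/-!
Since `j¹ = j²` and `j³ = j⁴`, both `P` and `Q` are products of squares, `P = W_a² X_{a_n}²` and
`Q = W_c² X_{c_n}²`, where `W_a = ∏_i Θ^{(i)}_{a_{i−1} a_i}` is the weight of the path `a`.
Two paths that differ at every vertex use disjoint sets of entries of the `Θ^{(i)}`, and end at
different coordinates of `X`; as the entries of `Θ` are independent of each other and of `X`,
the four factors `W_a², W_c², X_{a_n}², X_{c_n}²` are independent, so `E[PQ] = E[P] E[Q]`.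
-/

open MeasureTheory ProbabilityTheory
open scoped NNReal

noncomputable section

variable {Ω : Type*} [MeasurableSpace Ω]

/-- The product `(∏_{i=1}^n Θ^{(i)}_{a_{i−1} a_i}) X_{a_n} · (∏_{i=1}^n Θ^{(i)}_{b_{i−1} b_i}) X_{b_n}`
along two paths `a` and `b`. -/
def pathProd (d n : ℕ) (Θ : Fin n → Ω → Matrix (Fin d) (Fin d) ℝ)
    (X : Fin d → Ω → ℝ) (a b : Fin (n + 1) → Fin d) (ω : Ω) : ℝ :=
  ((∏ i : Fin n, Θ i ω (a i.castSucc) (a i.succ)) * X (a (Fin.last n)) ω) *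
    ((∏ i : Fin n, Θ i ω (b i.castSucc) (b i.succ)) * X (b (Fin.last n)) ω)

namespace ProbabilityTheory

variable {μ : Measure Ω}

theorem iIndepFun.indepFun_prod_prod_of_disjoint_range {ι κ κ' : Type*} [Fintype κ]
    [Fintype κ'] {f : ι → Ω → ℝ} (hf : iIndepFun f μ) (hmeas : ∀ i, Measurable (f i))
    {e : κ → ι} {e' : κ' → ι} (he : Disjoint (Set.range e) (Set.range e')) :
    (fun ω => ∏ k, f (e k) ω) ⟂ᵢ[μ] fun ω => ∏ k, f (e' k) ω := by
  classical
  have hS (k : κ) : e k ∈ Finset.univ.image e := Finset.mem_image_of_mem _ (Finset.mem_univ k)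
  have hT (k : κ') : e' k ∈ Finset.univ.image e' := Finset.mem_image_of_mem _ (Finset.mem_univ k)
  have hST : Disjoint (Finset.univ.image e) (Finset.univ.image e') := by
    rw [← Finset.disjoint_coe]; simpa using he
  exact (hf.indepFun_finset _ _ hST hmeas).comp
    (φ := fun v => ∏ k, v ⟨e k, hS k⟩) (ψ := fun v => ∏ k, v ⟨e' k, hT k⟩)
    (by fun_prop) (by fun_prop)

theorem integral_mul_mul_eq_mul_integral_of_indepFun [IsProbabilityMeasure μ]
    {A B C D : Ω → ℝ} (hA : Measurable A) (hB : Measurable B) (hC : Measurable C)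
    (hD : Measurable D) (hAB : A ⟂ᵢ[μ] B) (hCD : C ⟂ᵢ[μ] D)
    (h : (fun ω => (A ω, B ω)) ⟂ᵢ[μ] fun ω => (C ω, D ω)) :
    ∫ ω, A ω * C ω * (B ω * D ω) ∂μ = (∫ ω, A ω * C ω ∂μ) * ∫ ω, B ω * D ω ∂μ := by
  have hAC : A ⟂ᵢ[μ] C := h.comp measurable_fst measurable_fst
  have hBD : B ⟂ᵢ[μ] D := h.comp measurable_snd measurable_snd
  have hAB_CD : (fun ω => A ω * B ω) ⟂ᵢ[μ] fun ω => C ω * D ω :=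
    h.comp (φ := fun p : ℝ × ℝ => p.1 * p.2) (ψ := fun p : ℝ × ℝ => p.1 * p.2)
      (by fun_prop) (by fun_prop)
  calc ∫ ω, A ω * C ω * (B ω * D ω) ∂μ = ∫ ω, A ω * B ω * (C ω * D ω) ∂μ := by
        congr 1; funext ω; ring
    _ = (∫ ω, A ω ∂μ) * (∫ ω, B ω ∂μ) * ((∫ ω, C ω ∂μ) * ∫ ω, D ω ∂μ) := by
        rw [hAB_CD.integral_fun_mul_eq_mul_integral (by fun_prop) (by fun_prop),
          hAB.integral_fun_mul_eq_mul_integral (by fun_prop) (by fun_prop),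
          hCD.integral_fun_mul_eq_mul_integral (by fun_prop) (by fun_prop)]
    _ = (∫ ω, A ω * C ω ∂μ) * ∫ ω, B ω * D ω ∂μ := by
        rw [hAC.integral_fun_mul_eq_mul_integral (by fun_prop) (by fun_prop),
          hBD.integral_fun_mul_eq_mul_integral (by fun_prop) (by fun_prop)]
        ring

end ProbabilityTheory

section Paths

variable {d n : ℕ}

def pathWeight (Θ : Fin n → Ω → Matrix (Fin d) (Fin d) ℝ) (a : Fin (n + 1) → Fin d) (ω : Ω) :
    ℝ :=
  ∏ i : Fin n, Θ i ω (a i.castSucc) (a i.succ)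

variable {μ : Measure Ω} {Θ : Fin n → Ω → Matrix (Fin d) (Fin d) ℝ}

omit [MeasurableSpace Ω] in
theorem pathProd_self (X : Fin d → Ω → ℝ) (a : Fin (n + 1) → Fin d) :
    pathProd d n Θ X a a = fun ω => pathWeight Θ a ω ^ 2 * X (a (Fin.last n)) ω ^ 2 := by
  funext ω
  simp only [pathProd, pathWeight]
  ring

theorem measurable_pathWeight (hΘ : ∀ i a b, Measurable fun ω => Θ i ω a b)
    (a : Fin (n + 1) → Fin d) : Measurable (pathWeight Θ a) :=
  Finset.measurable_prod _ fun _ _ => hΘ _ _ _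

theorem indepFun_pathWeight
    (hΘ : iIndepFun (fun p : Fin n × Fin d × Fin d => fun ω => Θ p.1 ω p.2.1 p.2.2) μ)
    (hΘmeas : ∀ i a b, Measurable fun ω => Θ i ω a b) {a c : Fin (n + 1) → Fin d}
    (hac : ∀ ℓ, a ℓ ≠ c ℓ) : pathWeight Θ a ⟂ᵢ[μ] pathWeight Θ c := by
  refine hΘ.indepFun_prod_prod_of_disjoint_range (fun p => hΘmeas p.1 p.2.1 p.2.2)
    (e := fun i => (i, a i.castSucc, a i.succ)) (e' := fun i => (i, c i.castSucc, c i.succ)) ?_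
  rw [Set.disjoint_left]
  rintro _ ⟨i, rfl⟩ ⟨i', h⟩
  simp only [Prod.mk.injEq] at h
  obtain ⟨rfl, h, -⟩ := h
  exact hac _ h.symm

end Paths

theorem cov_pathProd_eq_zero_of_disjoint_paths_general (μ : Measure Ω) [IsProbabilityMeasure μ]
    (d n : ℕ)
    (Θ : Fin n → Ω → Matrix (Fin d) (Fin d) ℝ) (X : Fin d → Ω → ℝ)
    (hΘmeas : ∀ i a b, Measurable fun ω => Θ i ω a b)
    (hXmeas : ∀ j, Measurable (X j))
    (hentries : iIndepFun
      (fun p : Fin n × Fin d × Fin d => fun ω => Θ p.1 ω p.2.1 p.2.2) μ)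
    (hindepX : IndepFun (fun ω => fun p : Fin n × Fin d × Fin d => Θ p.1 ω p.2.1 p.2.2)
      (fun ω (j : Fin d) => X j ω) μ)
    (hXindep : iIndepFun X μ)
    (j : Fin 4 → Fin (n + 1) → Fin d)
    (hpaths : ∀ ℓ : Fin (n + 1), j 0 ℓ = j 1 ℓ ∧ j 2 ℓ = j 3 ℓ ∧ j 0 ℓ ≠ j 2 ℓ) :
    (∫ ω, pathProd d n Θ X (j 0) (j 1) ω * pathProd d n Θ X (j 2) (j 3) ω ∂μ)
        - (∫ ω, pathProd d n Θ X (j 0) (j 1) ω ∂μ)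
          * (∫ ω, pathProd d n Θ X (j 2) (j 3) ω ∂μ) = 0 := by
  have hj1 : j 1 = j 0 := funext fun ℓ => ((hpaths ℓ).1).symm
  have hj3 : j 3 = j 2 := funext fun ℓ => ((hpaths ℓ).2.1).symm
  have hac : ∀ ℓ, j 0 ℓ ≠ j 2 ℓ := fun ℓ => (hpaths ℓ).2.2
  have hsq : Measurable fun x : ℝ => x ^ 2 := measurable_id.pow_const 2
  have hΘX : (fun ω => (pathWeight Θ (j 0) ω ^ 2, pathWeight Θ (j 2) ω ^ 2)) ⟂ᵢ[μ]
      fun ω => (X (j 0 (Fin.last n)) ω ^ 2, X (j 2 (Fin.last n)) ω ^ 2) :=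
    hindepX.comp
      (φ := fun v => ((∏ i, v (i, j 0 i.castSucc, j 0 i.succ)) ^ 2,
        (∏ i, v (i, j 2 i.castSucc, j 2 i.succ)) ^ 2))
      (ψ := fun w => (w (j 0 (Fin.last n)) ^ 2, w (j 2 (Fin.last n)) ^ 2))
      (by fun_prop) (by fun_prop)
  rw [hj1, hj3, pathProd_self, pathProd_self, sub_eq_zero]
  exact integral_mul_mul_eq_mul_integral_of_indepFun
    (hsq.comp (measurable_pathWeight hΘmeas _)) (hsq.comp (measurable_pathWeight hΘmeas _))
    (hsq.comp (hXmeas _)) (hsq.comp (hXmeas _))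
    ((indepFun_pathWeight hentries hΘmeas hac).comp hsq hsq)
    ((hXindep.indepFun (hac (Fin.last n))).comp hsq hsq) hΘX

theorem cov_pathProd_eq_zero_of_disjoint_paths (μ : Measure Ω) [IsProbabilityMeasure μ]
    (d n : ℕ) (hd : 0 < d) (hn : 1 ≤ n)
    (Θ : Fin n → Ω → Matrix (Fin d) (Fin d) ℝ) (X : Fin d → Ω → ℝ)
    (hΘmeas : ∀ i a b, Measurable fun ω => Θ i ω a b)
    (hXmeas : ∀ j, Measurable (X j))
    (hentries : iIndepFun
      (fun p : Fin n × Fin d × Fin d => fun ω => Θ p.1 ω p.2.1 p.2.2) μ)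
    (hgauss : ∀ i a b, Measure.map (fun ω => Θ i ω a b) μ = gaussianReal 0 (d : ℝ≥0)⁻¹)
    (hindepX : IndepFun (fun ω => fun p : Fin n × Fin d × Fin d => Θ p.1 ω p.2.1 p.2.2)
      (fun ω (j : Fin d) => X j ω) μ)
    (hXindep : iIndepFun X μ)
    (hX4 : ∀ j, Integrable (fun ω => (X j ω) ^ 4) μ)
    (j : Fin 4 → Fin (n + 1) → Fin d)
    (hpaths : ∀ ℓ : Fin (n + 1), j 0 ℓ = j 1 ℓ ∧ j 2 ℓ = j 3 ℓ ∧ j 0 ℓ ≠ j 2 ℓ) :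
    (∫ ω, pathProd d n Θ X (j 0) (j 1) ω * pathProd d n Θ X (j 2) (j 3) ω ∂μ)
        - (∫ ω, pathProd d n Θ X (j 0) (j 1) ω ∂μ)
          * (∫ ω, pathProd d n Θ X (j 2) (j 3) ω ∂μ) = 0 :=
  cov_pathProd_eq_zero_of_disjoint_paths_general μ d n Θ X hΘmeas hXmeas hentries hindepX hXindep j
    hpaths

end
end
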